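/- arXiv:2510.07305 — 5 statements merged into one kernel-verified Lean document; each statement's English description precedes it below -/
import Mathlib

section
/- Let n ≥ 1 and k ≥ 1. Let f : ℝⁿ → ℂ admit a second-order Taylor expansion at the origin, with coefficients c₀ ∈ ℂ, ℓ₀ ∈ ℂⁿ, and symmetric A₀ ∈ ℂ^{n×n}. Let α = (α₁, …, α_k) ∈ ℝᵏ satisfy ‖α‖₂ = 1 and |αᵢ| ≠ 1 for every i. If f(r) = Σ_{i=1}^k f(αᵢ r) for all r ∈ ℝⁿ, then f is a quadratic polynomial; more precisely f(r) = c₀ + ℓ₀ᵀ r + rᵀ A₀ r for all r ∈ ℝⁿ. If moreover α₁ + ⋯ + α_k ≠ 1, then the linear term vanishes: ℓ₀ = 0. -/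
open scoped BigOperators

open Filter Topology

lemma sum_prod_pow_aux {k : ℕ} {M : Type*} [CommSemiring M] (β : Fin k → M) :
    ∀ m : ℕ, ∑ I : Fin m → Fin k, ∏ j, β (I j) = (∑ i, β i) ^ m := by
  intro m
  induction m with
  | zero => simp
  | succ m ih =>
      rw [← Equiv.sum_comp (Fin.consEquiv (fun _ : Fin (m+1) => Fin k))
        (fun I : Fin (m+1) → Fin k => ∏ j, β (I j))]
      rw [Fintype.sum_prod_type]
      simp only [Fin.consEquiv_apply, Fin.prod_univ_succ, Fin.cons_zero, Fin.cons_succ]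
      rw [pow_succ, ← ih, Finset.sum_mul, Finset.sum_comm]
      refine Finset.sum_congr rfl fun I _ => ?_
      rw [Finset.mul_sum]
      exact Finset.sum_congr rfl fun i _ => mul_comm _ _

lemma iter_aux {k n : ℕ} (α : Fin k → ℝ) (φ : (Fin n → ℝ) → ℂ)
    (hφ : ∀ r, φ r = ∑ i, φ (α i • r)) :
    ∀ (m : ℕ) (r), φ r = ∑ I : Fin m → Fin k, φ ((∏ j, α (I j)) • r) := by
  intro m
  induction m with
  | zero => intro r; simp
  | succ m ih =>
      intro r
      rw [← Equiv.sum_comp (Fin.consEquiv (fun _ : Fin (m+1) => Fin k))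
        (fun I : Fin (m+1) → Fin k => φ ((∏ j, α (I j)) • r))]
      rw [Fintype.sum_prod_type]
      simp only [Fin.consEquiv_apply, Fin.prod_univ_succ, Fin.cons_zero, Fin.cons_succ]
      rw [ih r]
      rw [Finset.sum_comm]
      refine Finset.sum_congr rfl fun I _ => ?_
      rw [hφ ((∏ j, α (I j)) • r)]
      refine Finset.sum_congr rfl fun i _ => ?_
      rw [mul_comm, mul_smul, smul_comm]

set_option maxHeartbeats 2000000 in
/-- If `f : ℝⁿ → ℂ` admits a second-order Taylor expansion at the origin
(with coefficients `c₀`, `ℓ₀`, symmetric `A₀`), `α ∈ ℝᵏ` has Euclidean norm one with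
`|αᵢ| ≠ 1` for all `i`, and `f(r) = Σᵢ f(αᵢ r)` for all `r`, then `f` is the quadratic
polynomial given by its Taylor coefficients; if moreover `Σᵢ αᵢ ≠ 1` then `ℓ₀ = 0`. -/
theorem quadratic_of_scaling_identity
    (n k : ℕ) (hn : 1 ≤ n) (hk : 1 ≤ k)
    (f : (Fin n → ℝ) → ℂ)
    (c₀ : ℂ) (ℓ₀ : Fin n → ℂ) (A₀ : Matrix (Fin n) (Fin n) ℂ) (hA₀ : A₀.IsSymm)
    (g : (Fin n → ℝ) → ℂ)
    (hTaylor : ∀ r : Fin n → ℝ,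
      f r = c₀ + (∑ i, ℓ₀ i * (r i : ℂ))
        + (∑ i, ∑ j, (r i : ℂ) * A₀ i j * (r j : ℂ)) + g r)
    (hg : Filter.Tendsto (fun r : Fin n → ℝ => g r / ((∑ i, (r i) ^ 2 : ℝ) : ℂ))
      (nhdsWithin 0 {0}ᶜ) (nhds 0))
    (α : Fin k → ℝ) (hα : ∑ i, (α i) ^ 2 = 1) (hαi : ∀ i, |α i| ≠ 1)
    (hfun : ∀ r : Fin n → ℝ, f r = ∑ i, f (α i • r)) :
    (∀ r : Fin n → ℝ,
      f r = c₀ + (∑ i, ℓ₀ i * (r i : ℂ))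
        + (∑ i, ∑ j, (r i : ℂ) * A₀ i j * (r j : ℂ)))
    ∧ ((∑ i, α i) ≠ 1 → ℓ₀ = 0) := by
  haveI : Nonempty (Fin n) := ⟨⟨0, hn⟩⟩
  haveI : Nontrivial (Fin n → ℝ) := Function.nontrivial
  haveI : NeBot (𝓝[≠] (0 : Fin n → ℝ)) := Module.punctured_nhds_neBot ℝ _ 0
  set Q : (Fin n → ℝ) → ℝ := fun r => ∑ i, (r i) ^ 2 with hQdef
  set L : (Fin n → ℝ) → ℂ := fun r => ∑ i, ℓ₀ i * (r i : ℂ) with hLdef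
  set B : (Fin n → ℝ) → ℂ := fun r => ∑ i, ∑ j, (r i : ℂ) * A₀ i j * (r j : ℂ) with hBdef
  -- basic facts about α
  have hsq : ∀ i, (α i) ^ 2 < 1 := by
    intro i
    rcases lt_or_eq_of_le (Finset.single_le_sum (f := fun i => (α i)^2)
      (fun j _ => sq_nonneg (α j)) (Finset.mem_univ i)) with h | h
    · rw [hα] at h; exact h
    · exfalso; apply hαi i
      have h1 : |α i| ^ 2 = 1 := by rw [sq_abs]; rw [hα] at h; exact h
      nlinarith [abs_nonneg (α i)]
  have habs : ∀ i, |α i| < 1 := by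
    intro i; nlinarith [hsq i, abs_nonneg (α i), sq_abs (α i)]
  have h2k : 2 ≤ k := by
    by_contra h
    have hk1 : k = 1 := by omega
    subst hk1
    rw [Fin.sum_univ_one] at hα
    exact (hsq 0).ne hα
  -- smul behavior
  have hQsmul : ∀ (t : ℝ) (r), Q (t • r) = t ^ 2 * Q r := by
    intro t r
    simp only [hQdef, Pi.smul_apply, smul_eq_mul, mul_pow, Finset.mul_sum]
  have hLsmul : ∀ (t : ℝ) (r), L (t • r) = (t : ℂ) * L r := by
    intro t r
    simp only [hLdef, Pi.smul_apply, smul_eq_mul, Complex.ofReal_mul, Finset.mul_sum]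
    exact Finset.sum_congr rfl fun i _ => by ring
  have hBsmul : ∀ (t : ℝ) (r), B (t • r) = (t : ℂ) ^ 2 * B r := by
    intro t r
    simp only [hBdef, Pi.smul_apply, smul_eq_mul, Complex.ofReal_mul, Finset.mul_sum]
    exact Finset.sum_congr rfl fun i _ => Finset.sum_congr rfl fun j _ => by ring
  have hL0 : L 0 = 0 := by simp [hLdef]
  have hB0 : B 0 = 0 := by simp [hBdef]
  have hQ0 : Q 0 = 0 := by simp [hQdef]
  have hQnonneg : ∀ r, 0 ≤ Q r := fun r => Finset.sum_nonneg fun i _ => sq_nonneg _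
  have hQpos : ∀ r : Fin n → ℝ, r ≠ 0 → 0 < Q r := by
    intro r hr
    rcases Function.ne_iff.mp hr with ⟨i, hi⟩
    exact Finset.sum_pos' (fun j _ => sq_nonneg _)
      ⟨i, Finset.mem_univ i, by nlinarith [abs_pos.mpr hi, sq_abs (r i)]⟩
  have hαC : (∑ i, ((α i : ℂ)) ^ 2) = 1 := by
    push_cast [← hα]; norm_cast
  -- f 0 = 0
  have hf0 : f 0 = 0 := by
    have h := hfun 0
    simp only [smul_zero, Finset.sum_const, Finset.card_univ, Fintype.card_fin,
      nsmul_eq_mul] at h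
    have hk1 : (k : ℂ) ≠ 1 := by
      intro hc
      have : (k : ℂ) = ((1 : ℕ) : ℂ) := by simpa using hc
      have := Nat.cast_injective (R := ℂ) this
      omega
    have : ((k : ℂ) - 1) * f 0 = 0 := by linear_combination -h
    rcases mul_eq_zero.mp this with h' | h'
    · exact absurd (by linear_combination h') hk1
    · exact h'
  -- φ satisfies the exact scaling identity
  set φ : (Fin n → ℝ) → ℂ := fun r => g r + c₀ + L r with hφdef
  have hφf : ∀ r, φ r = f r - B r := by
    intro r; rw [hTaylor r]; simp only [hφdef]; ring
  have hφeq : ∀ r, φ r = ∑ i, φ (α i • r) := by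
    intro r
    have : ∑ i, φ (α i • r) = ∑ i, (f (α i • r) - (α i : ℂ) ^ 2 * B r) := by
      refine Finset.sum_congr rfl fun i _ => ?_
      rw [hφf, hBsmul]
    rw [this, Finset.sum_sub_distrib, ← Finset.sum_mul, hαC, one_mul, ← hfun r, ← hφf]
  have hφ0 : φ 0 = 0 := by
    rw [hφf, hf0, hB0, sub_zero]
  have hg00 : g 0 = -c₀ := by
    have := hφ0
    rw [hφdef] at this
    simp only [hL0] at this
    linear_combination this
  -- g tends to 0 on the punctured neighborhood
  have hQcont : Continuous fun r : Fin n → ℝ => (Q r : ℂ) := by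
    apply Complex.continuous_ofReal.comp
    exact continuous_finset_sum _ fun i _ => ((continuous_apply i).pow 2)
  have hgto : Tendsto g (𝓝[≠] (0 : Fin n → ℝ)) (𝓝 0) := by
    have h2 : Tendsto (fun r : Fin n → ℝ => (Q r : ℂ)) (𝓝[≠] (0 : Fin n → ℝ)) (𝓝 0) := by
      simpa [hQ0] using (hQcont.tendsto 0).mono_left nhdsWithin_le_nhds
    have h1 : Tendsto (fun r : Fin n → ℝ => g r / (Q r : ℂ) * (Q r : ℂ))
        (𝓝[≠] (0 : Fin n → ℝ)) (𝓝 (0 * 0)) := hg.mul h2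
    rw [mul_zero] at h1
    refine h1.congr' ?_
    filter_upwards [self_mem_nhdsWithin] with r hr
    have : (Q r : ℂ) ≠ 0 := by
      exact_mod_cast (hQpos r hr).ne'
    rw [div_mul_cancel₀ _ this]
  have hLcont : Continuous L := by
    exact continuous_finset_sum _ fun i _ =>
      continuous_const.mul (Complex.continuous_ofReal.comp (continuous_apply i))
  have hBcont : Continuous B := by
    refine continuous_finset_sum _ fun i _ => continuous_finset_sum _ fun j _ => ?_
    exact ((Complex.continuous_ofReal.comp (continuous_apply i)).mul
      continuous_const).mul (Complex.continuous_ofReal.comp (continuous_apply j))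
  have hfto : Tendsto f (𝓝[≠] (0 : Fin n → ℝ)) (𝓝 c₀) := by
    have h1 : Tendsto (fun r => c₀ + L r + B r + g r) (𝓝[≠] (0 : Fin n → ℝ))
        (𝓝 (c₀ + 0 + 0 + 0)) := by
      refine (((tendsto_const_nhds.add ?_).add ?_).add hgto)
      · simpa [hL0] using (hLcont.tendsto 0).mono_left nhdsWithin_le_nhds
      · simpa [hB0] using (hBcont.tendsto 0).mono_left nhdsWithin_le_nhds
    simpa using h1.congr (fun r => (hTaylor r).symm)
  -- c₀ = 0
  have hc₀ : c₀ = 0 := by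
    have hcomp : ∀ i : Fin k, Tendsto (fun r : Fin n → ℝ => f (α i • r))
        (𝓝[≠] (0 : Fin n → ℝ)) (𝓝 (if α i = 0 then 0 else c₀)) := by
      intro i
      by_cases h : α i = 0
      · simp only [h, if_true, zero_smul, hf0]
        exact tendsto_const_nhds
      · simp only [h, if_false]
        refine hfto.comp ?_
        rw [tendsto_nhdsWithin_iff]
        constructor
        · have : Tendsto (fun r : Fin n → ℝ => α i • r) (𝓝 0) (𝓝 (α i • (0 : Fin n → ℝ))) :=
            (continuous_const_smul (α i)).tendsto 0
          simpa using this.mono_left nhdsWithin_le_nhds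
        · filter_upwards [self_mem_nhdsWithin] with r hr
          exact smul_ne_zero h hr
    have hsum : Tendsto (fun r : Fin n → ℝ => ∑ i, f (α i • r))
        (𝓝[≠] (0 : Fin n → ℝ)) (𝓝 (∑ i, if α i = 0 then 0 else c₀)) :=
      tendsto_finset_sum _ fun i _ => hcomp i
    have heq : c₀ = ∑ i, if α i = 0 then 0 else c₀ :=
      tendsto_nhds_unique (hfto.congr hfun) hsum
    set s : Finset (Fin k) := Finset.univ.filter (fun i => α i ≠ 0) with hs
    have hsumval : (∑ i, if α i = 0 then 0 else c₀) = (s.card : ℂ) * c₀ := by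
      calc ∑ i, (if α i = 0 then 0 else c₀)
          = ∑ i, (if α i ≠ 0 then c₀ else 0) :=
            Finset.sum_congr rfl fun i _ => by by_cases h : α i = 0 <;> simp [h]
        _ = ∑ i ∈ s, c₀ := (Finset.sum_filter _ _).symm
        _ = s.card • c₀ := Finset.sum_const _
        _ = (s.card : ℂ) * c₀ := nsmul_eq_mul _ _
    have hcard : c₀ = (s.card : ℂ) * c₀ := heq.trans hsumval
    have hsum2 : ∑ i ∈ s, α i ^ 2 = 1 := by
      rw [hs, Finset.sum_filter_of_ne, hα]
      intro i _ h hc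
      exact h (by rw [hc]; ring)
    have hs2 : 2 ≤ s.card := by
      by_contra h
      have h01 : s.card = 0 ∨ s.card = 1 := by omega
      rcases h01 with h0 | h1
      · rw [Finset.card_eq_zero] at h0
        rw [h0, Finset.sum_empty] at hsum2
        norm_num at hsum2
      · obtain ⟨i0, hi0⟩ := Finset.card_eq_one.mp h1
        rw [hi0, Finset.sum_singleton] at hsum2
        exact (hsq i0).ne hsum2
    have hne : ((s.card : ℂ) - 1) ≠ 0 := by
      intro h
      have h1 : (s.card : ℂ) = ((1 : ℕ) : ℂ) := by push_cast; linear_combination h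
      have := Nat.cast_injective (R := ℂ) h1
      omega
    have h0 : ((s.card : ℂ) - 1) * c₀ = 0 := by linear_combination -hcard
    rcases mul_eq_zero.mp h0 with h' | h'
    · exact absurd h' hne
    · exact h'
  subst hc₀
  have hg0 : g 0 = 0 := by rw [hg00]; ring
  set S : ℝ := ∑ i, α i with hSdef
  have hiter := iter_aux α φ hφeq
  have hsum2C : ∀ m : ℕ, ∑ I : Fin m → Fin k, (∏ j, α (I j)) ^ 2 = (1 : ℝ) := by
    intro m
    have h1 := sum_prod_pow_aux (fun i => α i ^ 2) m
    rw [hα, one_pow] at h1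
    rw [← h1]
    exact Finset.sum_congr rfl fun I _ => by rw [Finset.prod_pow]
  have hsumSC : ∀ m : ℕ, ∑ I : Fin m → Fin k, ((∏ j, α (I j) : ℝ) : ℂ) = ((S : ℝ) : ℂ) ^ m := by
    intro m
    calc ∑ I : Fin m → Fin k, ((∏ j, α (I j) : ℝ) : ℂ)
        = ∑ I : Fin m → Fin k, ∏ j, ((α (I j) : ℝ) : ℂ) :=
          Finset.sum_congr rfl fun I _ => Complex.ofReal_prod _ _
      _ = (∑ i, ((α i : ℝ) : ℂ)) ^ m := sum_prod_pow_aux (fun i => ((α i : ℝ) : ℂ)) m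
      _ = ((S : ℝ) : ℂ) ^ m := by rw [hSdef, Complex.ofReal_sum]
  set E : ℕ → (Fin n → ℝ) → ℂ :=
    fun m r => ∑ I : Fin m → Fin k, g ((∏ j, α (I j)) • r) with hEdef
  have hstar : ∀ (m : ℕ) (r), φ r = E m r + ((S : ℝ) : ℂ) ^ m * L r := by
    intro m r
    rw [hiter m r]
    have h1 : ∀ I : Fin m → Fin k, φ ((∏ j, α (I j)) • r)
        = g ((∏ j, α (I j)) • r) + ((∏ j, α (I j) : ℝ) : ℂ) * L r := by
      intro I
      simp only [hφdef]
      rw [hLsmul]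
      ring
    rw [Finset.sum_congr rfl (fun I _ => h1 I), Finset.sum_add_distrib,
      ← Finset.sum_mul, hsumSC]
  obtain ⟨β, hβ0, hβ1, hβb⟩ : ∃ β : ℝ, 0 ≤ β ∧ β < 1 ∧ ∀ i, |α i| ≤ β := by
    haveI : Nonempty (Fin k) := ⟨⟨0, hk⟩⟩
    refine ⟨Finset.univ.sup' Finset.univ_nonempty (fun i => |α i|), ?_, ?_, ?_⟩
    · exact le_trans (abs_nonneg _)
        (Finset.le_sup' (fun i => |α i|) (Finset.mem_univ (Classical.arbitrary (Fin k))))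
    · exact (Finset.sup'_lt_iff _).mpr fun i _ => habs i
    · intro i; exact Finset.le_sup' (fun i => |α i|) (Finset.mem_univ i)
  have hE0 : ∀ r, Tendsto (fun m => E m r) atTop (𝓝 0) := by
    intro r
    by_cases hr : r = 0
    · subst hr
      have hz : ∀ m, E m (0 : Fin n → ℝ) = 0 := by
        intro m; simp [hEdef, hg0]
      exact tendsto_const_nhds.congr fun m => (hz m).symm
    · rw [Metric.tendsto_atTop]
      intro ε hε
      have hQr := hQpos r hr
      set ε' := ε / (Q r + 1) with hε'def
      have hε' : 0 < ε' := div_pos hε (by linarith)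
      obtain ⟨δ, hδ, hδg⟩ := Metric.tendsto_nhdsWithin_nhds.mp hg ε' hε'
      have hβm : Tendsto (fun m : ℕ => β ^ m * ‖r‖) atTop (𝓝 0) := by
        simpa using (tendsto_pow_atTop_nhds_zero_of_lt_one hβ0 hβ1).mul_const ‖r‖
      obtain ⟨N, hN⟩ := (Metric.tendsto_atTop.mp hβm) δ hδ
      refine ⟨N, fun m hm => ?_⟩
      rw [dist_zero_right]
      have hbound : ∀ I : Fin m → Fin k,
          ‖g ((∏ j, α (I j)) • r)‖ ≤ ε' * ((∏ j, α (I j)) ^ 2 * Q r) := by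
        intro I
        set lam := ∏ j, α (I j) with hlam
        by_cases hl0 : lam = 0
        · rw [hl0, zero_smul, hg0, norm_zero]
          positivity
        · have hx0 : lam • r ≠ 0 := smul_ne_zero hl0 hr
          have hxd : dist (lam • r) 0 < δ := by
            rw [dist_zero_right, norm_smul]
            have h1 : |lam| ≤ β ^ m := by
              rw [hlam, Finset.abs_prod]
              calc ∏ j, |α (I j)|
                  ≤ ∏ _j : Fin m, β :=
                    Finset.prod_le_prod (fun j _ => abs_nonneg _) (fun j _ => hβb _)
                _ = β ^ m := by simp
            have h2 := hN m hm
            rw [Real.dist_eq, sub_zero] at h2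
            have h3 : |β ^ m * ‖r‖| = β ^ m * ‖r‖ := abs_of_nonneg (by positivity)
            rw [h3] at h2
            calc ‖lam‖ * ‖r‖ = |lam| * ‖r‖ := by rw [Real.norm_eq_abs]
              _ ≤ β ^ m * ‖r‖ := mul_le_mul_of_nonneg_right h1 (norm_nonneg r)
              _ < δ := h2
          have h4 := hδg hx0 hxd
          rw [dist_zero_right, norm_div] at h4
          have hQxpos : 0 < Q (lam • r) := hQpos _ hx0
          have h5 : ‖((Q (lam • r) : ℝ) : ℂ)‖ = Q (lam • r) := by
            rw [Complex.norm_real, Real.norm_eq_abs, abs_of_pos hQxpos]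
          rw [h5] at h4
          have h6 := (div_lt_iff₀ hQxpos).mp h4
          rw [hQsmul] at h6
          exact le_of_lt h6
      calc ‖E m r‖ ≤ ∑ I : Fin m → Fin k, ‖g ((∏ j, α (I j)) • r)‖ := norm_sum_le _ _
        _ ≤ ∑ I : Fin m → Fin k, ε' * ((∏ j, α (I j)) ^ 2 * Q r) :=
            Finset.sum_le_sum fun I _ => hbound I
        _ = ε' * Q r := by
            rw [← Finset.mul_sum, ← Finset.sum_mul, hsum2C m, one_mul]
        _ < ε := by
            have h7 : ε' * (Q r + 1) = ε := div_mul_cancel₀ _ (by linarith)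
            nlinarith
  have hφval : ∀ r, φ r = g r + L r := by
    intro r; simp only [hφdef]; ring
  have hQsingle : ∀ j, Q (Pi.single j (1:ℝ)) = 1 := by
    intro j
    simp only [hQdef, Pi.single_apply]
    rw [Finset.sum_eq_single j]
    · simp
    · intro i _ hij; simp [hij]
    · intro h; exact absurd (Finset.mem_univ j) h
  have hLsingle : ∀ j, L (Pi.single j (1:ℝ)) = ℓ₀ j := by
    intro j
    simp only [hLdef, Pi.single_apply]
    rw [Finset.sum_eq_single j]
    · simp
    · intro i _ hij; simp [hij]
    · intro h; exact absurd (Finset.mem_univ j) h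
  obtain ⟨hgz, hlin⟩ : (∀ r, g r = 0) ∧ (S ≠ 1 → ∀ r, L r = 0) := by
    by_cases hS1 : S = 1
    · refine ⟨?_, fun h => absurd hS1 h⟩
      intro r
      have hconst : ∀ m : ℕ, E m r = φ r - L r := by
        intro m
        have h1 := hstar m r
        rw [hS1] at h1
        simp only [Complex.ofReal_one, one_pow, one_mul] at h1
        linear_combination -h1
      have h1 : Tendsto (fun m : ℕ => E m r) atTop (𝓝 (φ r - L r)) :=
        tendsto_const_nhds.congr fun m => (hconst m).symm
      have h2 := tendsto_nhds_unique h1 (hE0 r)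
      have h3 := hφval r
      linear_combination h2 - h3
    · have hLr : ∀ r, L r = 0 := by
        by_cases habsS : |S| < 1
        · have hSm : Tendsto (fun m : ℕ => ((S : ℝ) : ℂ) ^ m) atTop (𝓝 0) := by
            apply tendsto_pow_atTop_nhds_zero_of_norm_lt_one
            rw [Complex.norm_real, Real.norm_eq_abs]; exact habsS
          have hφzero : ∀ r, φ r = 0 := by
            intro r
            have h1 : Tendsto (fun m : ℕ => E m r + ((S : ℝ) : ℂ) ^ m * L r) atTop
                (𝓝 (0 + 0 * L r)) := (hE0 r).add (hSm.mul_const (L r))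
            have h2 : Tendsto (fun m : ℕ => φ r) atTop (𝓝 (φ r)) := tendsto_const_nhds
            have h3 := tendsto_nhds_unique (h2.congr fun m => hstar m r) h1
            rw [h3]; ring
          have hgL : ∀ r, g r = -L r := by
            intro r
            have h1 := hφzero r
            rw [hφval r] at h1
            linear_combination h1
          have hl0 : ∀ j, ℓ₀ j = 0 := by
            intro j
            set e : Fin n → ℝ := Pi.single j 1 with hedef
            have he0 : e ≠ 0 := by
              intro hcon
              have h1 := congrFun hcon j
              rw [hedef] at h1
              simp at h1
            have hmap : Tendsto (fun t : ℝ => t • e) (𝓝[≠] (0 : ℝ))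
                (𝓝[≠] (0 : Fin n → ℝ)) := by
              rw [tendsto_nhdsWithin_iff]
              constructor
              · have h1 : Continuous fun t : ℝ => t • e := continuous_id.smul continuous_const
                simpa using (h1.tendsto 0).mono_left nhdsWithin_le_nhds
              · filter_upwards [self_mem_nhdsWithin] with t ht
                exact smul_ne_zero ht he0
            have hcomp := hg.comp hmap
            have htt : Tendsto (fun t : ℝ => (t : ℂ)) (𝓝[≠] (0 : ℝ)) (𝓝 0) := by
              simpa using (Complex.continuous_ofReal.tendsto 0).mono_left nhdsWithin_le_nhds
            have hprod : Tendsto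
                (fun t : ℝ => (g (t • e) / ((Q (t • e) : ℝ) : ℂ)) * (t : ℂ))
                (𝓝[≠] (0 : ℝ)) (𝓝 (0 * 0)) := hcomp.mul htt
            rw [mul_zero] at hprod
            have hev : ∀ᶠ (t : ℝ) in 𝓝[≠] (0 : ℝ),
                (g (t • e) / ((Q (t • e) : ℝ) : ℂ)) * (t : ℂ) = -ℓ₀ j := by
              filter_upwards [self_mem_nhdsWithin] with t ht
              have h1 : g (t • e) = -((t : ℂ) * ℓ₀ j) := by
                rw [hgL, hLsmul]
                rw [hedef, hLsingle j]
              have h2 : Q (t • e) = t ^ 2 := by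
                rw [hQsmul, hedef, hQsingle j, mul_one]
              have ht' : (t : ℂ) ≠ 0 := by exact_mod_cast ht
              rw [h1, h2]
              push_cast
              field_simp
            have hconst2 : Tendsto (fun _ : ℝ => -ℓ₀ j) (𝓝[≠] (0 : ℝ)) (𝓝 0) :=
              hprod.congr' hev
            haveI : NeBot (𝓝[≠] (0 : ℝ)) := by
              exact Module.punctured_nhds_neBot ℝ ℝ 0
            have h4 := tendsto_nhds_unique hconst2 tendsto_const_nhds
            linear_combination h4
          intro r
          rw [hLdef]
          exact Finset.sum_eq_zero fun i _ => by rw [hl0 i, zero_mul]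
        · push_neg at habsS
          intro r
          by_contra hLne
          have hdiff : ∀ m : ℕ, E (m + 1) r - E m r
              = ((S : ℝ) : ℂ) ^ m * ((1 - ((S : ℝ) : ℂ)) * L r) := by
            intro m
            have h1 := hstar m r
            have h2 := hstar (m + 1) r
            have h3 : E (m + 1) r - E m r
                = ((S : ℝ) : ℂ) ^ m * L r - ((S : ℝ) : ℂ) ^ (m + 1) * L r := by
              linear_combination h1 - h2
            rw [h3, pow_succ]; ring
          have h1 : Tendsto (fun m : ℕ => E (m + 1) r - E m r) atTop (𝓝 0) := by
            have h2 := ((hE0 r).comp (tendsto_add_atTop_nat 1)).sub (hE0 r)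
            simpa using h2
          have h2 := ((tendsto_congr hdiff).mp h1).norm
          rw [norm_zero] at h2
          set c := ‖(1 - ((S : ℝ) : ℂ)) * L r‖ with hc
          have hcpos : 0 < c := by
            rw [hc, norm_mul]
            apply mul_pos
            · rw [norm_pos_iff]
              intro hcon
              apply hS1
              have h3 : ((S : ℝ) : ℂ) = 1 := by linear_combination -hcon
              exact_mod_cast h3
            · rw [norm_pos_iff]; exact hLne
          have h3 := h2.eventually_lt_const hcpos
          obtain ⟨m, hm⟩ := h3.exists
          have h4 : c ≤ ‖((S : ℝ) : ℂ) ^ m * ((1 - ((S : ℝ) : ℂ)) * L r)‖ := by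
            rw [norm_mul, norm_pow, Complex.norm_real, Real.norm_eq_abs, ← hc]
            have h5 : 1 ≤ |S| ^ m := one_le_pow₀ habsS
            nlinarith
          exact absurd hm (not_lt.mpr h4)
      refine ⟨?_, fun _ => hLr⟩
      intro r
      have h1 : Tendsto (fun m : ℕ => φ r) atTop (𝓝 (φ r)) := tendsto_const_nhds
      have h3 := tendsto_nhds_unique
        (h1.congr fun m => by rw [hstar m r, hLr r, mul_zero, add_zero]) (hE0 r)
      have h4 := hφval r
      rw [hLr r] at h4
      linear_combination h3 - h4
  refine ⟨?_, ?_⟩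
  · intro r
    rw [hTaylor r, hgz r, add_zero]
  · intro hS
    funext j
    have h2 := hlin hS (Pi.single j 1)
    rw [hLsingle j] at h2
    simpa using h2
end

section
/- Let m ≥ 1 and k ≥ 2. Let f : ℝ^m → ℂ be continuous with f(0) = 0 and admit a second-order Taylor expansion at the origin, with coefficients ℓ₀ ∈ ℂ^m and symmetric A₀ ∈ ℂ^{m×m} (constant term 0). Let o be a nontrivial real orthogonal k×k matrix, and suppose that for all r₁, …, r_k ∈ ℝ^m one has ∏_{j=1}^k exp(f(Σ_{l=1}^k o_{lj} r_l)) = ∏_{j=1}^k exp(f(r_j)). Then f is a quadratic polynomial: f(r) = ℓ₀ᵀ r + rᵀ A₀ r for all r ∈ ℝ^m. If moreover o is not stochastic, then ℓ₀ = 0, i.e. f is a homogeneous quadratic form. -/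
/-!
Write `rotationDefect o φ r = ∑ⱼ φ (∑ₗ o_{lj} rₗ) - ∑ⱼ φ rⱼ`. The defect of `f` is continuous on a
connected space and its exponential is `1`, so, `exp` being a covering map, it vanishes.
In the Taylor decomposition `f = L + Q + g` the quadratic part `Q` has zero defect because `o` is
orthogonal, and the defect of the linear part `L` is itself linear in `r`. The defect of
`g = o(‖r‖²)` has zero derivative at `0`, which forces the linear defect, and hence that of `g`,
to vanish. A row `a` of `o` with an entry outside `{0, ±1}` then gives `g s = ∑ⱼ g (aⱼ • s)` with
`∑ aⱼ² = 1` and all `|aⱼ| < 1`; iterating pushes `s` into balls where `‖g‖ ≤ ε ‖·‖²`, so `g = 0`.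
If `o` is not stochastic, some row sum differs from `1`, and the vanishing linear defect
forces `ℓ₀ = 0`.
-/

open Filter Topology Asymptotics

section RotationDefect

variable {ι R E M : Type*} [Fintype ι]

section Semiring

variable [Semiring R] [AddCommMonoid E] [Module R E] [AddCommGroup M]

def rotationDefect (o : Matrix ι ι R) (φ : E → M) (r : ι → E) : M :=
  ∑ j, φ (∑ l, o l j • r l) - ∑ j, φ (r j)

lemma rotationDefect_add (o : Matrix ι ι R) (φ ψ : E → M) :
    rotationDefect o (φ + ψ) = rotationDefect o φ + rotationDefect o ψ := by
  ext r
  simp only [rotationDefect, Pi.add_apply, Finset.sum_add_distrib]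
  abel

lemma rotationDefect_single [DecidableEq ι] (o : Matrix ι ι R) {φ : E → M} (hφ : φ 0 = 0)
    (l₀ : ι) (s : E) :
    rotationDefect o φ (Pi.single l₀ s) = ∑ j, φ (o l₀ j • s) - φ s := by
  simp [rotationDefect, Pi.single_apply, apply_ite φ, hφ]

end Semiring

section CommRing

variable [CommRing R] [AddCommGroup E] [Module R E] [AddCommGroup M] [Module R M]

lemma rotationDefect_linearMap (o : Matrix ι ι R) (L : E →ₗ[R] M) (r : ι → E) :
    rotationDefect o L r = ∑ l, (∑ j, o l j - 1) • L (r l) := by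
  simp only [rotationDefect, map_sum, map_smul, sub_smul, Finset.sum_smul, one_smul,
    Finset.sum_sub_distrib, sub_left_inj]
  exact Finset.sum_comm

lemma rotationDefect_linearMap_smul (o : Matrix ι ι R) (L : E →ₗ[R] M) (t : R) (r : ι → E) :
    rotationDefect o L (t • r) = t • rotationDefect o L r := by
  simp only [rotationDefect_linearMap, Finset.smul_sum, Pi.smul_apply, map_smul, smul_comm t]

lemma rotationDefect_bilin_self [DecidableEq ι] {o : Matrix ι ι R} (ho : o * o.transpose = 1)
    (B : E →ₗ[R] E →ₗ[R] M) : rotationDefect o (fun x => B x x) = 0 := by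
  ext r
  have horth : ∀ l l', ∑ j, o l j * o l' j = if l = l' then 1 else 0 := fun l l' => by
    simpa [Matrix.mul_apply, Matrix.one_apply] using congrFun (congrFun ho l) l'
  simp only [rotationDefect, map_sum, map_smul, LinearMap.sum_apply, LinearMap.smul_apply,
    Finset.smul_sum, smul_smul, Pi.zero_apply]
  rw [Finset.sum_comm, sub_eq_zero]
  refine Finset.sum_congr rfl fun l _ => ?_
  rw [Finset.sum_comm]
  simp [← Finset.sum_smul, horth]

lemma LinearMap.eq_zero_of_rotationDefect_eq_zero [NoZeroSMulDivisors R M] [DecidableEq ι]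
    {o : Matrix ι ι R} (ho : o.mulVec (fun _ => 1) ≠ fun _ => 1) {L : E →ₗ[R] M}
    (hL : rotationDefect o L = 0) : L = 0 := by
  obtain ⟨l₁, hl₁⟩ := Function.ne_iff.mp ho
  ext v
  have h := congrFun hL (Pi.single l₁ v)
  simp only [rotationDefect_linearMap, Pi.single_apply, apply_ite L, L.map_zero, smul_ite,
    smul_zero, Finset.sum_ite_eq', Finset.mem_univ, if_true, Pi.zero_apply] at h
  have hρ : ∑ j, o l₁ j - 1 ≠ 0 := sub_ne_zero.mpr (by simpa [Matrix.mulVec, dotProduct] using hl₁)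
  simpa using (eq_zero_or_eq_zero_of_smul_eq_zero h).resolve_left hρ

end CommRing

end RotationDefect

lemma Matrix.sum_sq_row_eq_one {ι : Type*} [Fintype ι] [DecidableEq ι] {o : Matrix ι ι ℝ}
    (ho : o * o.transpose = 1) (l : ι) : ∑ j, o l j ^ 2 = 1 := by
  simpa [Matrix.mul_apply, Matrix.one_apply, sq] using congrFun (congrFun ho l) l

lemma abs_lt_one_of_sum_sq_eq_one {ι : Type*} [Fintype ι] {a : ι → ℝ} (ha : ∑ i, a i ^ 2 = 1)
    {i₀ : ι} (h0 : a i₀ ≠ 0) (h1 : a i₀ ≠ 1) (hm1 : a i₀ ≠ -1) (i : ι) : |a i| < 1 := by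
  classical
  rw [← sq_lt_one_iff_abs_lt_one]
  by_cases hi : i = i₀
  · subst hi
    have hle := Finset.single_le_sum (fun j _ => sq_nonneg (a j)) (Finset.mem_univ i)
    rw [ha] at hle
    exact hle.lt_of_ne fun h => (sq_eq_one_iff.mp h).elim h1 hm1
  · have hle := Finset.sum_le_sum_of_subset_of_nonneg (Finset.subset_univ {i, i₀})
      fun j _ _ => sq_nonneg (a j)
    rw [Finset.sum_pair hi, ha] at hle
    have : 0 < a i₀ ^ 2 := by positivity
    linarith

lemma eq_zero_of_exp_eq_one {X : Type*} [TopologicalSpace X] [PreconnectedSpace X] {F : X → ℂ}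
    (hF : Continuous F) (hexp : ∀ x, Complex.exp (F x) = 1) {x₀ : X} (hx₀ : F x₀ = 0) : F = 0 :=
  Complex.isCoveringMap_exp.eq_of_comp_eq hF continuous_const
    (funext fun x => Subtype.ext <| by simp [hexp]) x₀ hx₀

section Analysis

variable {ι E M : Type*} [Fintype ι] [NormedAddCommGroup E] [NormedSpace ℝ E]

lemma rotationDefect_eq_zero_of_prod_exp {o : Matrix ι ι ℝ} {f : E → ℂ} (hf : Continuous f)
    (hf0 : f 0 = 0)
    (hexp : ∀ r : ι → E, ∏ j, Complex.exp (f (∑ l, o l j • r l)) = ∏ j, Complex.exp (f (r j))) :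
    rotationDefect o f = 0 := by
  refine eq_zero_of_exp_eq_one (by unfold rotationDefect; fun_prop) (fun r => ?_)
    (x₀ := 0) (by simp [rotationDefect, hf0])
  rw [rotationDefect, Complex.exp_sub, Complex.exp_sum, Complex.exp_sum, hexp,
    div_self (Finset.prod_ne_zero_iff.mpr fun j _ => Complex.exp_ne_zero _)]

variable [NormedAddCommGroup M]

lemma eq_zero_of_sum_comp_smul_eq_self {a : ι → ℝ} (ha : ∑ i, a i ^ 2 = 1) (ha1 : ∀ i, |a i| < 1)
    {g : E → M} (hg : g =o[𝓝 0] fun x => ‖x‖ ^ 2) (hself : ∀ x, ∑ i, g (a i • x) = g x) :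
    g = 0 := by
  obtain ⟨c, hc0, hc1, hac⟩ : ∃ c, 0 ≤ c ∧ c < 1 ∧ ∀ i, |a i| ≤ c := by
    obtain ⟨i₁, -, -⟩ := Finset.exists_ne_zero_of_sum_ne_zero (ha.trans_ne one_ne_zero)
    have : Nonempty ι := ⟨i₁⟩
    obtain ⟨i₀, hi₀⟩ := Finite.exists_max fun i => |a i|
    exact ⟨|a i₀|, abs_nonneg _, ha1 i₀, hi₀⟩
  funext x
  have hbound : ∀ ε > 0, ‖g x‖ ≤ ε * ‖x‖ ^ 2 := by
    intro ε hε
    obtain ⟨δ, hδ, hball⟩ := Metric.eventually_nhds_iff.mp (hg.def hε)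
    have hscaled : ∀ n : ℕ, ∀ y : E, ‖y‖ * c ^ n < δ → ‖g y‖ ≤ ε * ‖y‖ ^ 2 := by
      intro n
      induction n with
      | zero => intro y hy; simpa using hball (by simpa using hy)
      | succ n ih =>
        intro y hy
        calc ‖g y‖ = ‖∑ i, g (a i • y)‖ := by rw [hself]
          _ ≤ ∑ i, ‖g (a i • y)‖ := norm_sum_le _ _
          _ ≤ ∑ i, ε * ‖a i • y‖ ^ 2 := Finset.sum_le_sum fun i _ => ih _ <| by
              calc ‖a i • y‖ * c ^ n = |a i| * ‖y‖ * c ^ n := by rw [norm_smul, Real.norm_eq_abs]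
                _ ≤ c * ‖y‖ * c ^ n := by gcongr; exact hac i
                _ = ‖y‖ * c ^ (n + 1) := by ring
                _ < δ := hy
          _ = ε * ‖y‖ ^ 2 := by
              simp only [norm_smul, mul_pow, Real.norm_eq_abs, sq_abs, ← Finset.mul_sum,
                ← Finset.sum_mul, ha, one_mul]
    obtain ⟨n, hn⟩ : ∃ n : ℕ, ‖x‖ * c ^ n < δ := by
      have h := (tendsto_pow_atTop_nhds_zero_of_lt_one hc0 hc1).const_mul ‖x‖
      rw [mul_zero] at h
      exact (h.eventually (gt_mem_nhds hδ)).exists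
    exact hscaled n x hn
  have hlim : Tendsto (fun ε : ℝ => ε * ‖x‖ ^ 2) (𝓝[>] 0) (𝓝 0) := by
    simpa using (tendsto_id.mul_const (‖x‖ ^ 2)).mono_left (nhdsWithin_le_nhds (a := (0 : ℝ)))
  exact norm_le_zero_iff.mp (ge_of_tendsto hlim (eventually_nhdsWithin_of_forall hbound))

lemma eq_zero_of_rotationDefect_eq_zero [DecidableEq ι] {o : Matrix ι ι ℝ}
    (ho : o * o.transpose = 1) {l₀ j₀ : ι} (h0 : o l₀ j₀ ≠ 0) (h1 : o l₀ j₀ ≠ 1)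
    (hm1 : o l₀ j₀ ≠ -1) {g : E → M} (hg : g =o[𝓝 0] fun x => ‖x‖ ^ 2)
    (hinv : rotationDefect o g = 0) : g = 0 := by
  have hg0 : g 0 = 0 :=
    (by simpa using hg.isBigO : g =O[𝓝 0] fun x => ‖x - 0‖ ^ 2).eq_zero_of_norm_pow two_ne_zero
  have hrow := Matrix.sum_sq_row_eq_one ho l₀
  refine eq_zero_of_sum_comp_smul_eq_self hrow (abs_lt_one_of_sum_sq_eq_one hrow h0 h1 hm1) hg
    fun s => sub_eq_zero.mp ?_
  rw [← rotationDefect_single o hg0 l₀ s, hinv, Pi.zero_apply]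

variable [NormedSpace ℝ M]

lemma HasFDerivAt.rotationDefect (o : Matrix ι ι ℝ) {φ : E → M}
    (hφ : HasFDerivAt φ (0 : E →L[ℝ] M) 0) :
    HasFDerivAt (rotationDefect o φ) (0 : (ι → E) →L[ℝ] M) 0 := by
  have hproj (j : ι) : HasFDerivAt (fun r : ι → E => r j)
      (ContinuousLinearMap.proj j : (ι → E) →L[ℝ] E) 0 := hasFDerivAt_apply j 0
  have hmix (j : ι) : HasFDerivAt (fun r : ι → E => ∑ l, o l j • r l)
      (∑ l, o l j • ContinuousLinearMap.proj l) 0 :=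
    HasFDerivAt.fun_sum fun l _ => (hproj l).const_smul (o l j)
  have hφ' (j : ι) : HasFDerivAt φ (0 : E →L[ℝ] M) (∑ l, o l j • (0 : ι → E) l) := by
    simpa using hφ
  have hsum := (HasFDerivAt.fun_sum (u := .univ) fun j _ => (hφ' j).comp 0 (hmix j)).sub
    (HasFDerivAt.fun_sum (u := .univ) fun j _ =>
      (hφ : HasFDerivAt φ _ ((0 : ι → E) j)).comp (0 : ι → E) (hproj j))
  simp only [Function.comp_def, ContinuousLinearMap.zero_comp, Finset.sum_const_zero,
    sub_zero] at hsum
  exact hsum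

lemma eq_zero_of_hasFDerivAt_zero_of_map_smul {Φ : E → M} (hΦ : HasFDerivAt Φ (0 : E →L[ℝ] M) 0)
    (hsmul : ∀ (t : ℝ) x, Φ (t • x) = t • Φ x) : Φ = 0 := by
  funext x
  have hline : HasDerivAt (fun t : ℝ => Φ (t • x)) 0 0 := by
    have h := (show HasFDerivAt Φ (0 : E →L[ℝ] M) ((0 : ℝ) • x) by simpa using hΦ).comp_hasDerivAt
      (0 : ℝ) ((hasDerivAt_id 0).smul_const x)
    rwa [zero_apply] at h
  simp_rw [hsmul] at hline
  simpa using ((hasDerivAt_id (0 : ℝ)).smul_const (Φ x)).unique hline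

lemma rotationDefect_eq_zero_of_add_bilin_add [DecidableEq ι] {o : Matrix ι ι ℝ}
    (ho : o * o.transpose = 1) (L : E →ₗ[ℝ] M) (B : E →ₗ[ℝ] E →ₗ[ℝ] M) {g : E → M}
    (hg : HasFDerivAt g (0 : E →L[ℝ] M) 0)
    (hinv : rotationDefect o ((L : E → M) + (fun x => B x x) + g) = 0) :
    rotationDefect o L = 0 ∧ rotationDefect o g = 0 := by
  rw [rotationDefect_add, rotationDefect_add, rotationDefect_bilin_self ho, add_zero] at hinv
  have hL : rotationDefect o L = 0 := by
    refine eq_zero_of_hasFDerivAt_zero_of_map_smul ?_ (rotationDefect_linearMap_smul o L)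
    simpa [eq_neg_of_add_eq_zero_left hinv] using (hg.rotationDefect o).neg
  exact ⟨hL, by simpa [hL] using hinv⟩

end Analysis

lemma isLittleO_norm_sq_of_tendsto_div_sum_sq {n : Type*} [Fintype n] {g : (n → ℝ) → ℂ}
    (hg0 : g 0 = 0)
    (hg : Tendsto (fun r => g r / ((∑ i, r i ^ 2 : ℝ) : ℂ)) (𝓝[≠] 0) (𝓝 0)) :
    g =o[𝓝 0] fun r => ‖r‖ ^ 2 := by
  have hsum : g =o[𝓝[≠] 0] fun r => ((∑ i, r i ^ 2 : ℝ) : ℂ) := by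
    refine (isLittleO_iff_tendsto fun r hr => ?_).mpr hg
    have hr0 : r = 0 := funext fun i => by
      simpa using (Finset.sum_eq_zero_iff_of_nonneg fun j _ => sq_nonneg (r j)).mp
        (by exact_mod_cast hr) i (Finset.mem_univ i)
    rw [hr0, hg0]
  have hnorm : (fun r => ((∑ i, r i ^ 2 : ℝ) : ℂ)) =O[𝓝[≠] 0] fun r : n → ℝ => ‖r‖ ^ 2 := by
    refine IsBigO.of_bound (Fintype.card n) (Eventually.of_forall fun r => ?_)
    have hcoord (i : n) : r i ^ 2 ≤ ‖r‖ ^ 2 := by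
      simpa [Real.norm_eq_abs, sq_abs] using
        pow_le_pow_left₀ (norm_nonneg _) (norm_le_pi_norm r i) 2
    rw [Complex.norm_real, Real.norm_of_nonneg (by positivity), norm_pow, norm_norm]
    simpa using Finset.sum_le_card_nsmul Finset.univ _ _ fun i _ => hcoord i
  rw [← nhdsNE_sup_pure, isLittleO_sup]
  exact ⟨hsum.trans_isBigO hnorm, isLittleO_pure.mpr hg0⟩

noncomputable section Coordinates

variable {n : Type*} [Fintype n]

def coeffLinearForm (ℓ : n → ℂ) : (n → ℝ) →ₗ[ℝ] ℂ where
  toFun r := ∑ i, ℓ i * (r i : ℂ)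
  map_add' r s := by simp [mul_add, Finset.sum_add_distrib]
  map_smul' t r := by simp [Finset.mul_sum, mul_left_comm]

def matrixBilinForm (A : Matrix n n ℂ) : (n → ℝ) →ₗ[ℝ] (n → ℝ) →ₗ[ℝ] ℂ :=
  LinearMap.mk₂ ℝ (fun r s => ∑ i, ∑ j, (r i : ℂ) * A i j * (s j : ℂ))
    (fun r r' s => by simp [add_mul, Finset.sum_add_distrib])
    (fun t r s => by simp [Finset.mul_sum, mul_assoc])
    (fun r s s' => by simp [mul_add, Finset.sum_add_distrib])
    (fun t r s => by simp [Finset.mul_sum, mul_left_comm])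

end Coordinates

theorem quadratic_of_rotation_invariance_exp_general
    (m k : ℕ)
    (f : (Fin m → ℝ) → ℂ) (hcont : Continuous f) (hf0 : f 0 = 0)
    (ℓ₀ : Fin m → ℂ) (A₀ : Matrix (Fin m) (Fin m) ℂ)
    (g : (Fin m → ℝ) → ℂ)
    (hTaylor : ∀ r : Fin m → ℝ,
      f r = (∑ i, ℓ₀ i * (r i : ℂ))
        + (∑ i, ∑ j, (r i : ℂ) * A₀ i j * (r j : ℂ)) + g r)
    (hg : Filter.Tendsto (fun r : Fin m → ℝ => g r / ((∑ i, (r i) ^ 2 : ℝ) : ℂ))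
      (nhdsWithin 0 {0}ᶜ) (nhds 0))
    (o : Matrix (Fin k) (Fin k) ℝ) (ho : o.transpose * o = 1)
    (hnontrivial : ¬ ∀ l j, o l j = 0 ∨ o l j = 1 ∨ o l j = -1)
    (hfun : ∀ r : Fin k → (Fin m → ℝ),
      ∏ j, Complex.exp (f (∑ l, o l j • r l)) = ∏ j, Complex.exp (f (r j))) :
    (∀ r : Fin m → ℝ,
      f r = (∑ i, ℓ₀ i * (r i : ℂ))
        + (∑ i, ∑ j, (r i : ℂ) * A₀ i j * (r j : ℂ)))
    ∧ (o.mulVec (fun _ => 1) ≠ (fun _ => 1) → ℓ₀ = 0) := by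
  have ho' : o * o.transpose = 1 := mul_eq_one_comm.mp ho
  have hg0 : g 0 = 0 := by simpa [hf0] using (hTaylor 0).symm
  have hgo := isLittleO_norm_sq_of_tendsto_div_sum_sq hg0 hg
  have hf : f = (coeffLinearForm ℓ₀ : (Fin m → ℝ) → ℂ) + (fun x => matrixBilinForm A₀ x x) + g :=
    funext hTaylor
  obtain ⟨hL, hg_inv⟩ := rotationDefect_eq_zero_of_add_bilin_add ho' _ _
    ((by simpa using hgo.isBigO : g =O[𝓝 0] fun x => ‖x - 0‖ ^ 2).hasFDerivAt one_lt_two)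
    (hf ▸ rotationDefect_eq_zero_of_prod_exp hcont hf0 hfun)
  obtain ⟨l₀, j₀, h0, h1, hm1⟩ : ∃ l j, o l j ≠ 0 ∧ o l j ≠ 1 ∧ o l j ≠ -1 := by
    simpa [not_or] using hnontrivial
  have hg_zero := eq_zero_of_rotationDefect_eq_zero ho' h0 h1 hm1 hgo hg_inv
  refine ⟨fun r => by simpa [hg_zero] using hTaylor r, fun hns => ?_⟩
  have hL0 := LinearMap.eq_zero_of_rotationDefect_eq_zero hns hL
  funext i
  simpa [coeffLinearForm, Pi.single_apply, apply_ite] using LinearMap.congr_fun hL0 (Pi.single i 1)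

/-- characteristic-function form of the rotation-invariance
characterization. If a continuous `f : ℝᵐ → ℂ` with `f 0 = 0` admits a second-order
Taylor expansion at the origin (constant term `0`, coefficients `ℓ₀`, symmetric `A₀`),
`o` is a nontrivial real orthogonal `k × k` matrix, and
`∏ⱼ exp(f(Σₗ o_{lj} rₗ)) = ∏ⱼ exp(f(rⱼ))` for all `r₁, …, r_k ∈ ℝᵐ`, then `f` is the
quadratic polynomial given by its Taylor coefficients; if moreover `o` is not
stochastic then `ℓ₀ = 0`. -/
theorem quadratic_of_rotation_invariance_exp
    (m k : ℕ) (hm : 1 ≤ m) (hk : 2 ≤ k)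
    (f : (Fin m → ℝ) → ℂ) (hcont : Continuous f) (hf0 : f 0 = 0)
    (ℓ₀ : Fin m → ℂ) (A₀ : Matrix (Fin m) (Fin m) ℂ) (hA₀ : A₀.IsSymm)
    (g : (Fin m → ℝ) → ℂ)
    (hTaylor : ∀ r : Fin m → ℝ,
      f r = (∑ i, ℓ₀ i * (r i : ℂ))
        + (∑ i, ∑ j, (r i : ℂ) * A₀ i j * (r j : ℂ)) + g r)
    (hg : Filter.Tendsto (fun r : Fin m → ℝ => g r / ((∑ i, (r i) ^ 2 : ℝ) : ℂ))
      (nhdsWithin 0 {0}ᶜ) (nhds 0))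
    (o : Matrix (Fin k) (Fin k) ℝ) (ho : o.transpose * o = 1)
    (hnontrivial : ¬ ∀ l j, o l j = 0 ∨ o l j = 1 ∨ o l j = -1)
    (hfun : ∀ r : Fin k → (Fin m → ℝ),
      ∏ j, Complex.exp (f (∑ l, o l j • r l)) = ∏ j, Complex.exp (f (r j))) :
    (∀ r : Fin m → ℝ,
      f r = (∑ i, ℓ₀ i * (r i : ℂ))
        + (∑ i, ∑ j, (r i : ℂ) * A₀ i j * (r j : ℂ)))
    ∧ (o.mulVec (fun _ => 1) ≠ (fun _ => 1) → ℓ₀ = 0) :=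
  quadratic_of_rotation_invariance_exp_general m k f hcont hf0 ℓ₀ A₀ g hTaylor hg o ho hnontrivial
    hfun
end

section
/- Let n ≥ 1 and let V ∈ ℝ^{2n×2n} be a symmetric positive-definite matrix such that the complex matrix V + iΩ is positive semidefinite. Then Ω V Ωᵀ − V⁻¹ is positive semidefinite (i.e. V⁻¹ ⪯ Ω V Ωᵀ in the Loewner order). Consequently, the operator norms satisfy ‖V⁻¹‖ ≤ ‖V‖, and the condition number K(V) := ‖V‖·‖V⁻¹‖ satisfies K(V) ≤ ‖V‖². -/
/-!
Testing the uncertainty relation `V + iΩ ⪰ 0` against `z = V⁻¹x + iΩᵀx` gives, in the real part,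
`xᵀ(ΩVΩᵀ - V⁻¹)x ≥ 0`, because `Ω² = -1` and `ΩΩᵀ = 1`. Hence `0 ⪯ V⁻¹ ⪯ ΩVΩᵀ`; on positive
operators the norm is monotone for the Loewner order, and conjugation by the orthogonal `Ω`
preserves it, so `‖V⁻¹‖ ≤ ‖ΩVΩᵀ‖ = ‖V‖`.
-/

open Matrix
open scoped ComplexOrder

namespace ContinuousLinearMap

variable {𝕜 E : Type*} [RCLike 𝕜] [NormedAddCommGroup E] [InnerProductSpace 𝕜 E]

theorem rayleighQuotient_nonneg {T : E →L[𝕜] E} (hT : T.IsPositive) (x : E) :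
    0 ≤ T.rayleighQuotient x :=
  div_nonneg (hT.re_inner_nonneg_left x) (by positivity)

theorem norm_le_norm_of_nonneg_of_le {S T : E →L[𝕜] E} (hS : 0 ≤ S) (hST : S ≤ T) :
    ‖S‖ ≤ ‖T‖ := by
  rw [nonneg_iff_isPositive] at hS
  rw [S.norm_eq_iSup_rayleighQuotient hS.isSymmetric]
  refine ciSup_le fun x => ?_
  calc |S.rayleighQuotient x| = S.rayleighQuotient x :=
        abs_of_nonneg (rayleighQuotient_nonneg hS x)
    _ ≤ S.rayleighQuotient x + (T - S).rayleighQuotient x :=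
        le_add_of_nonneg_right (rayleighQuotient_nonneg hST x)
    _ = T.rayleighQuotient x := by rw [← rayleighQuotient_add, add_sub_cancel]
    _ ≤ ‖T‖ := (le_abs_self _).trans (T.rayleighQuotient_le_norm x)

end ContinuousLinearMap

namespace Matrix

section L2Norm

variable {𝕜 m : Type*} [RCLike 𝕜] [Fintype m] [DecidableEq m]

theorem isPositive_toEuclideanCLM_iff {A : Matrix m m 𝕜} :
    (toEuclideanCLM (𝕜 := 𝕜) A).IsPositive ↔ A.PosSemidef := by
  rw [← ContinuousLinearMap.isPositive_toLinearMap_iff, coe_toEuclideanCLM_eq_toEuclideanLin,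
    isPositive_toEuclideanLin_iff]

theorem norm_toEuclideanCLM_le_of_posSemidef_sub {A B : Matrix m m 𝕜} (hA : A.PosSemidef)
    (hBA : (B - A).PosSemidef) :
    ‖toEuclideanCLM (𝕜 := 𝕜) A‖ ≤ ‖toEuclideanCLM (𝕜 := 𝕜) B‖ := by
  refine ContinuousLinearMap.norm_le_norm_of_nonneg_of_le ?_ ?_
  · exact (ContinuousLinearMap.nonneg_iff_isPositive _).mpr (isPositive_toEuclideanCLM_iff.mpr hA)
  · rw [ContinuousLinearMap.le_def, ← map_sub]
    exact isPositive_toEuclideanCLM_iff.mpr hBA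

theorem norm_toEuclideanCLM_unitary_conj {U : Matrix m m 𝕜} (hU : U ∈ unitaryGroup m 𝕜)
    (A : Matrix m m 𝕜) :
    ‖toEuclideanCLM (𝕜 := 𝕜) (U * A * star U)‖ = ‖toEuclideanCLM (𝕜 := 𝕜) A‖ := by
  have hU' := Unitary.map_mem (toEuclideanCLM (𝕜 := 𝕜) (n := m)) hU
  rw [map_mul, map_mul, map_star, CStarRing.norm_mul_mem_unitary _ (Unitary.star_mem hU'),
    CStarRing.norm_mem_unitary_mul _ hU']

end L2Norm

section Uncertainty

variable {m : Type*} [Fintype m]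

theorem mulVec_dotProduct_mulVec_mulVec {R : Type*} [CommSemiring R] (A B C : Matrix m m R)
    (x y : m → R) : (A *ᵥ x) ⬝ᵥ B *ᵥ (C *ᵥ y) = x ⬝ᵥ (Aᵀ * B * C) *ᵥ y := by
  rw [← vecMul_transpose, ← dotProduct_mulVec, mulVec_mulVec, mulVec_mulVec, Matrix.mul_assoc]

theorem re_dotProduct_mulVec_ofReal_add_I_smul (V O : Matrix m m ℝ) (a b : m → ℝ) :
    (star (fun j => (⟨a j, b j⟩ : ℂ)) ⬝ᵥ
      (V.map (Complex.ofReal ·) + Complex.I • O.map (Complex.ofReal ·)) *ᵥ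
        fun j => (⟨a j, b j⟩ : ℂ)).re =
      a ⬝ᵥ V *ᵥ a + b ⬝ᵥ V *ᵥ b + (b ⬝ᵥ O *ᵥ a - a ⬝ᵥ O *ᵥ b) := by
  simp only [dotProduct, mulVec, Complex.re_sum, Finset.mul_sum, ← Finset.sum_add_distrib,
    ← Finset.sum_sub_distrib]
  refine Finset.sum_congr rfl fun i _ => Finset.sum_congr rfl fun j _ => ?_
  simp only [Pi.star_apply, RCLike.star_def, add_apply, map_apply, smul_apply, smul_eq_mul,
    Complex.mul_re, Complex.mul_im, Complex.add_re, Complex.add_im, Complex.conj_re,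
    Complex.conj_im, Complex.ofReal_re, Complex.ofReal_im, Complex.I_re, Complex.I_im]
  ring

theorem dotProduct_mulVec_nonneg_of_posSemidef_ofReal_add_I_smul {V O : Matrix m m ℝ}
    (h : (V.map (Complex.ofReal ·) + Complex.I • O.map (Complex.ofReal ·)).PosSemidef)
    (a b : m → ℝ) :
    0 ≤ a ⬝ᵥ V *ᵥ a + b ⬝ᵥ V *ᵥ b + (b ⬝ᵥ O *ᵥ a - a ⬝ᵥ O *ᵥ b) := by
  rw [← re_dotProduct_mulVec_ofReal_add_I_smul]
  exact (Complex.nonneg_iff.mp (h.dotProduct_mulVec_nonneg _)).1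

theorem posSemidef_conj_sub_inv_of_posSemidef_ofReal_add_I_smul [DecidableEq m]
    {V O : Matrix m m ℝ} (hV : V.PosDef) (hOO : O * O = -1) (hOOt : O * Oᵀ = 1)
    (h : (V.map (Complex.ofReal ·) + Complex.I • O.map (Complex.ofReal ·)).PosSemidef) :
    (O * V * Oᵀ - V⁻¹).PosSemidef := by
  have hdet : IsUnit V.det := (isUnit_iff_isUnit_det V).mp hV.isUnit
  have hVt : Vᵀ = V := by
    simpa [conjTranspose_eq_transpose_of_trivial] using hV.isHermitian.eq
  have hherm : (O * V * Oᵀ).IsHermitian := by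
    simpa [conjTranspose_eq_transpose_of_trivial] using
      isHermitian_mul_mul_conjTranspose O hV.isHermitian
  refine .of_dotProduct_mulVec_nonneg (hherm.sub hV.isHermitian.inv) fun x => ?_
  have hq := dotProduct_mulVec_nonneg_of_posSemidef_ofReal_add_I_smul h (V⁻¹ *ᵥ x) (Oᵀ *ᵥ x)
  simp only [mulVec_dotProduct_mulVec_mulVec, transpose_transpose, transpose_nonsing_inv, hVt,
    nonsing_inv_mul V hdet, Matrix.one_mul, hOO, Matrix.mul_assoc V⁻¹ O Oᵀ, hOOt,
    Matrix.mul_one, Matrix.neg_mul, neg_mulVec, dotProduct_neg] at hq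
  rw [star_trivial, sub_mulVec, dotProduct_sub]
  linarith

end Uncertainty

theorem fromBlocks_zero_one_neg_one_zero_eq_neg_J (l : Type*) [DecidableEq l] {R : Type*}
    [CommRing R] :
    fromBlocks (0 : Matrix l l R) 1 (-1) 0 = -J l R := by
  simp [J, fromBlocks_neg]

end Matrix

theorem inv_le_symplectic_conj_of_uncertainty_general
    (n : ℕ)
    (V : Matrix (Fin n ⊕ Fin n) (Fin n ⊕ Fin n) ℝ)
    (hpos : V.PosDef)
    (huncert :
      (V.map (Complex.ofReal ·) +
        Complex.I • (Matrix.fromBlocks (0 : Matrix (Fin n) (Fin n) ℝ) 1 (-1) 0).map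
          (Complex.ofReal ·)).PosSemidef) :
    ((Matrix.fromBlocks (0 : Matrix (Fin n) (Fin n) ℝ) 1 (-1) 0) * V *
        (Matrix.fromBlocks (0 : Matrix (Fin n) (Fin n) ℝ) 1 (-1) 0).transpose
      - V⁻¹).PosSemidef
    ∧ ‖Matrix.toEuclideanCLM (𝕜 := ℝ) V⁻¹‖ ≤ ‖Matrix.toEuclideanCLM (𝕜 := ℝ) V‖
    ∧ ‖Matrix.toEuclideanCLM (𝕜 := ℝ) V‖ * ‖Matrix.toEuclideanCLM (𝕜 := ℝ) V⁻¹‖ ≤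
        ‖Matrix.toEuclideanCLM (𝕜 := ℝ) V‖ ^ 2 := by
  set Ω : Matrix (Fin n ⊕ Fin n) (Fin n ⊕ Fin n) ℝ := fromBlocks 0 1 (-1) 0
  have hΩ_eq : Ω = -J (Fin n) ℝ := fromBlocks_zero_one_neg_one_zero_eq_neg_J _
  have hΩΩ : Ω * Ω = -1 := by rw [hΩ_eq, neg_mul_neg, J_squared]
  have hΩΩt : Ω * Ωᵀ = 1 := by
    rw [hΩ_eq, transpose_neg, J_transpose, neg_neg, neg_mul, J_squared, neg_neg]
  have hloewner : (Ω * V * Ωᵀ - V⁻¹).PosSemidef :=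
    posSemidef_conj_sub_inv_of_posSemidef_ofReal_add_I_smul hpos hΩΩ hΩΩt huncert
  have hΩ : Ω ∈ unitaryGroup (Fin n ⊕ Fin n) ℝ := by
    rwa [mem_unitaryGroup_iff, star_eq_conjTranspose, conjTranspose_eq_transpose_of_trivial]
  have hnorm : ‖toEuclideanCLM (𝕜 := ℝ) V⁻¹‖ ≤ ‖toEuclideanCLM (𝕜 := ℝ) V‖ := calc
    _ ≤ ‖toEuclideanCLM (𝕜 := ℝ) (Ω * V * Ωᵀ)‖ :=
      norm_toEuclideanCLM_le_of_posSemidef_sub hpos.inv.posSemidef hloewner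
    _ = ‖toEuclideanCLM (𝕜 := ℝ) V‖ := by
      rw [← conjTranspose_eq_transpose_of_trivial, ← star_eq_conjTranspose,
        norm_toEuclideanCLM_unitary_conj hΩ]
  refine ⟨hloewner, hnorm, ?_⟩
  rw [sq]
  exact mul_le_mul_of_nonneg_left hnorm (norm_nonneg _)

/-- for a symmetric positive-definite `V ∈ ℝ^{2n×2n}` satisfying the
uncertainty relation `V + iΩ ⪰ 0` (with `Ω` the standard symplectic form), one has
`V⁻¹ ⪯ Ω V Ωᵀ`; consequently `‖V⁻¹‖ ≤ ‖V‖` (L² operator norms) and the condition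
number satisfies `K(V) = ‖V‖·‖V⁻¹‖ ≤ ‖V‖²`. -/
theorem inv_le_symplectic_conj_of_uncertainty
    (n : ℕ) (hn : 1 ≤ n)
    (V : Matrix (Fin n ⊕ Fin n) (Fin n ⊕ Fin n) ℝ)
    (hsymm : V.IsSymm) (hpos : V.PosDef)
    (huncert :
      (V.map (Complex.ofReal ·) +
        Complex.I • (Matrix.fromBlocks (0 : Matrix (Fin n) (Fin n) ℝ) 1 (-1) 0).map
          (Complex.ofReal ·)).PosSemidef) :
    ((Matrix.fromBlocks (0 : Matrix (Fin n) (Fin n) ℝ) 1 (-1) 0) * V *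
        (Matrix.fromBlocks (0 : Matrix (Fin n) (Fin n) ℝ) 1 (-1) 0).transpose
      - V⁻¹).PosSemidef
    ∧ ‖Matrix.toEuclideanCLM (𝕜 := ℝ) V⁻¹‖ ≤ ‖Matrix.toEuclideanCLM (𝕜 := ℝ) V‖
    ∧ ‖Matrix.toEuclideanCLM (𝕜 := ℝ) V‖ * ‖Matrix.toEuclideanCLM (𝕜 := ℝ) V⁻¹‖ ≤
        ‖Matrix.toEuclideanCLM (𝕜 := ℝ) V‖ ^ 2 :=
  inv_le_symplectic_conj_of_uncertainty_general n V hpos huncert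
end

section
/- Let n ≥ 1 and let ψ ∈ 𝒮(ℝⁿ;ℂ) with ‖ψ‖_{L²} = 1 and vanishing first moments, i.e. ⟨ψ, R_j ψ⟩_{L²} = 0 for all j = 1, …, 2n. Let V = V(ψ) be its covariance matrix and let Φ(x,y) = ψ(x)ψ(y). Then ⟨Φ, G(GΦ)⟩_{L²(ℝ^{2n})} = (1/4)·Tr(Ω V Ωᵀ V) − n/2. -/
/-!
On product states `G` acts as the derivation `-i ∑ₖ (xₖ ⊗ ∂ₖ - ∂ₖ ⊗ xₖ)`, so `G² (ψ ⊗ ψ)` is an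
explicit finite sum of products `f(x) g(y)` of Schwartz functions built from `ψ` by the operators
`xₖ` and `∂ₖ`. By Fubini each term pairs to a product of one-particle inner products, and moving
the operators onto the left factor (`xₖ` is symmetric, `∂ₖ` antisymmetric) expresses the left-hand
side through the Gram matrices `A = (⟨xₖψ, xₗψ⟩)`, `D = (⟨∂ₖψ, ∂ₗψ⟩)`, `M = (⟨xₖψ, ∂ₗψ⟩)` as
`2 (tr (A D) - tr (M̄ M))`. With vanishing first moments the covariance matrix is
`2 [[Re A, Im M], [(Im M)ᵀ, Re D]]`, and the canonical commutation relation forces `Re M = -1/2`;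
the `-n/2` is the trace of the resulting `1/4` on the diagonal of `M̄ M`.
-/

open scoped BigOperators
open MeasureTheory

/-- The quadrature operators: `R_j` (for `j = Sum.inl i`) is multiplication by the
coordinate `x_i`, and (for `j = Sum.inr i`) it is `-i ∂/∂x_i`. -/
noncomputable def quadratureOp (n : ℕ) (j : Fin n ⊕ Fin n)
    (f : (Fin n → ℝ) → ℂ) : (Fin n → ℝ) → ℂ :=
  match j with
  | Sum.inl i => fun x => (x i : ℂ) * f x
  | Sum.inr i => fun x => -Complex.I * fderiv ℝ f x (Pi.single i 1)

/-- The first moments `m_j(ψ) = ⟨ψ, R_j ψ⟩` (a real number). -/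
noncomputable def firstMoment (n : ℕ) (ψ : (Fin n → ℝ) → ℂ) (j : Fin n ⊕ Fin n) : ℝ :=
  (∫ x, (starRingEnd ℂ) (ψ x) * quadratureOp n j ψ x).re

/-- The covariance matrix `V(ψ)_{jk} = 2 Re ⟨(R_j − m_j)ψ, (R_k − m_k)ψ⟩`. -/
noncomputable def covMatrix (n : ℕ) (ψ : (Fin n → ℝ) → ℂ) :
    Matrix (Fin n ⊕ Fin n) (Fin n ⊕ Fin n) ℝ :=
  Matrix.of fun j k => 2 *
    (∫ x, (starRingEnd ℂ) (quadratureOp n j ψ x - (firstMoment n ψ j : ℂ) * ψ x) *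
      (quadratureOp n k ψ x - (firstMoment n ψ k : ℂ) * ψ x)).re

/-- The standard symplectic form `Ω = [[0, Iₙ], [−Iₙ, 0]]`. -/
noncomputable def symplOmega (n : ℕ) : Matrix (Fin n ⊕ Fin n) (Fin n ⊕ Fin n) ℝ :=
  Matrix.fromBlocks 0 1 (-1) 0

/-- The generator `G` of simultaneous phase-space rotations of two copies:
`(GΦ)(x,y) = −i Σ_j (x_j ∂Φ/∂y_j − y_j ∂Φ/∂x_j)`. -/
noncomputable def rotGen (n : ℕ) (F : ((Fin n → ℝ) × (Fin n → ℝ)) → ℂ) :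
    ((Fin n → ℝ) × (Fin n → ℝ)) → ℂ :=
  fun z => -Complex.I * ∑ j : Fin n,
    ((z.1 j : ℂ) * fderiv ℝ F z (0, Pi.single j 1)
      - (z.2 j : ℂ) * fderiv ℝ F z (Pi.single j 1, 0))

open scoped ComplexConjugate LineDeriv Matrix
open SchwartzMap

noncomputable section

def conjMulCLM : ℂ →L[ℝ] ℂ →L[ℝ] ℂ :=
  (ContinuousLinearMap.mul ℝ ℂ).comp (Complex.conjCLE : ℂ →L[ℝ] ℂ)

def tensor {D : Type*} (f g : D → ℂ) : D × D → ℂ := fun z => f z.1 * g z.2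

section SchwartzOnNormedSpace

variable {D : Type*} [NormedAddCommGroup D] [NormedSpace ℝ D]

def mulLinear (ℓ : D →L[ℝ] ℝ) : 𝓢(D, ℂ) →L[ℝ] 𝓢(D, ℂ) :=
  bilinLeftCLM (ContinuousLinearMap.mul ℝ ℂ).flip (Complex.ofRealCLM.comp ℓ).hasTemperateGrowth

@[simp]
theorem mulLinear_apply (ℓ : D →L[ℝ] ℝ) (f : 𝓢(D, ℂ)) (x : D) : mulLinear ℓ f x = ℓ x * f x :=
  rfl

theorem lineDerivOp_mulLinear (ℓ : D →L[ℝ] ℝ) (f : 𝓢(D, ℂ)) (v : D) :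
    ∂_{v} (mulLinear ℓ f) = (ℓ v : ℂ) • f + mulLinear ℓ (∂_{v} f) := by
  ext x
  have h := ((Complex.ofRealCLM.comp ℓ).hasFDerivAt (x := x)).mul (f.hasFDerivAt x)
  have h' : ⇑(mulLinear ℓ f) = ⇑(Complex.ofRealCLM.comp ℓ) * ⇑f := rfl
  rw [lineDerivOp_apply_eq_fderiv, h', h.fderiv]
  simp only [ContinuousLinearMap.comp_apply, Complex.ofRealCLM_apply, add_apply, smul_apply,
    smul_eq_mul, mulLinear_apply, lineDerivOp_apply_eq_fderiv]
  ring

theorem hasFDerivAt_tensor {f g : D → ℂ} {f' g' : D →L[ℝ] ℂ} {z : D × D}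
    (hf : HasFDerivAt f f' z.1) (hg : HasFDerivAt g g' z.2) :
    HasFDerivAt (tensor f g) (f z.1 • g'.comp (.snd ℝ D D) + g z.2 • f'.comp (.fst ℝ D D)) z :=
  (hf.comp z hasFDerivAt_fst).mul (hg.comp z hasFDerivAt_snd)

theorem differentiable_tensor {f g : D → ℂ} (hf : Differentiable ℝ f) (hg : Differentiable ℝ g) :
    Differentiable ℝ (tensor f g) :=
  fun z => (hasFDerivAt_tensor (hf z.1).hasFDerivAt (hg z.2).hasFDerivAt).differentiableAt

theorem fderiv_tensor_apply {f g : D → ℂ} (hf : Differentiable ℝ f) (hg : Differentiable ℝ g)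
    (z v : D × D) :
    fderiv ℝ (tensor f g) z v = fderiv ℝ f z.1 v.1 * g z.2 + f z.1 * fderiv ℝ g z.2 v.2 := by
  rw [(hasFDerivAt_tensor (hf z.1).hasFDerivAt (hg z.2).hasFDerivAt).fderiv]
  simp only [add_apply, smul_apply, ContinuousLinearMap.comp_apply, ContinuousLinearMap.coe_fst',
    ContinuousLinearMap.coe_snd', smul_eq_mul]
  ring

variable [MeasureSpace D]

def l2Inner (f g : 𝓢(D, ℂ)) : ℂ := ∫ x, conj (f x) * g x

theorem conj_l2Inner (f g : 𝓢(D, ℂ)) : conj (l2Inner f g) = l2Inner g f := by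
  simp only [l2Inner, ← integral_conj, map_mul, Complex.conj_conj, mul_comm]

theorem l2Inner_smul_right (c : ℂ) (f g : 𝓢(D, ℂ)) : l2Inner f (c • g) = c * l2Inner f g := by
  simp only [l2Inner, smul_apply, smul_eq_mul, mul_left_comm _ c, integral_const_mul]

theorem l2Inner_smul_left (c : ℂ) (f g : 𝓢(D, ℂ)) : l2Inner (c • f) g = conj c * l2Inner f g := by
  rw [← conj_l2Inner, l2Inner_smul_right, map_mul, conj_l2Inner]

theorem l2Inner_mulLinear_right (ℓ : D →L[ℝ] ℝ) (f g : 𝓢(D, ℂ)) :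
    l2Inner f (mulLinear ℓ g) = l2Inner (mulLinear ℓ f) g := by
  simp only [l2Inner, mulLinear_apply, map_mul, Complex.conj_ofReal, mul_left_comm, mul_assoc]

variable [FiniteDimensional ℝ D] [(volume : Measure D).IsAddHaarMeasure]

theorem integral_conj_tensor_mul_tensor (φ ψ f g : 𝓢(D, ℂ)) :
    ∫ z : D × D, conj (tensor φ ψ z) * tensor f g z = l2Inner φ f * l2Inner ψ g := by
  rw [Measure.volume_eq_prod, l2Inner, l2Inner, ← integral_prod_mul]
  congr 1 with z
  simp only [tensor, map_mul]
  ring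

variable [BorelSpace D]

theorem integrable_conj_mul (f g : 𝓢(D, ℂ)) : Integrable fun x => conj (f x) * g x :=
  (bilinLeftCLM conjMulCLM g.hasTemperateGrowth f).integrable

theorem l2Inner_add_right (f g h : 𝓢(D, ℂ)) : l2Inner f (g + h) = l2Inner f g + l2Inner f h := by
  simp only [l2Inner, add_apply, mul_add]
  exact integral_add (integrable_conj_mul f g) (integrable_conj_mul f h)

theorem l2Inner_lineDerivOp_right (f g : 𝓢(D, ℂ)) (v : D) :
    l2Inner f (∂_{v} g) = -l2Inner (∂_{v} f) g :=
  integral_bilinear_lineDerivOp_right_eq_neg_left f g conjMulCLM v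

/-- The canonical commutation relation `[∂_v, ℓ] = ℓ v`, evaluated in the state `f`. -/
theorem l2Inner_mulLinear_lineDerivOp_add_conj (ℓ : D →L[ℝ] ℝ) (f : 𝓢(D, ℂ)) (v : D) :
    l2Inner (mulLinear ℓ f) (∂_{v} f) + conj (l2Inner (mulLinear ℓ f) (∂_{v} f))
      = -(ℓ v * l2Inner f f) := by
  rw [conj_l2Inner, ← neg_neg (l2Inner (∂_{v} f) _), ← l2Inner_lineDerivOp_right,
    lineDerivOp_mulLinear, l2Inner_add_right, l2Inner_smul_right, l2Inner_mulLinear_right]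
  ring

theorem integrable_conj_tensor_mul_tensor (φ ψ f g : 𝓢(D, ℂ)) :
    Integrable fun z : D × D => conj (tensor φ ψ z) * tensor f g z := by
  rw [Measure.volume_eq_prod]
  refine ((integrable_conj_mul φ f).mul_prod (integrable_conj_mul ψ g)).congr
    (.of_forall fun z => ?_)
  simp only [tensor, map_mul]
  ring

end SchwartzOnNormedSpace

section MatrixAlgebra

variable {ι : Type*} [Fintype ι]

theorem trace_mul_eq_ofReal_of_isSymm_of_isHermitian {A B : Matrix ι ι ℂ} (hAs : A.IsSymm)
    (hA : A.IsHermitian) (hB : B.IsHermitian) :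
    (A * B).trace = ((A.map Complex.re * B.map Complex.re).trace : ℂ) := by
  have hreal : conj (A * B).trace = (A * B).trace := by
    change star _ = _
    rw [← Matrix.trace_conjTranspose, Matrix.conjTranspose_mul, hA.eq, hB.eq, Matrix.trace_mul_comm]
  have hAim (k l : ι) : (A k l).im = 0 := by
    rw [← Complex.conj_eq_iff_im]
    simpa [hAs.apply] using hA.apply l k
  rw [← Complex.conj_eq_iff_re.mp hreal]
  simp [Matrix.trace, Matrix.mul_apply, Complex.re_sum, hAim]

theorem trace_map_conj_mul_of_add_conj_eq_neg_one [DecidableEq ι] {M : Matrix ι ι ℂ}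
    (hM : ∀ k l, M k l + conj (M k l) = -(1 : Matrix ι ι ℂ) k l) :
    (M.map conj * M).trace
      = Fintype.card ι / 4 + ((M.map Complex.im * M.map Complex.im).trace : ℂ) := by
  have hre (k l : ι) : (M k l).re = -(if k = l then 1 else 0) / 2 := by
    have := congrArg Complex.re (hM k l)
    simp only [Complex.add_re, Complex.conj_re, Matrix.one_apply, apply_ite, Complex.neg_re,
      Complex.one_re, Complex.zero_re, neg_zero] at this
    split_ifs at this ⊢ <;> linarith
  have hkl (k l : ι) : conj (M k l) * M l k
      = (if k = l then 1 / 4 else 0) + ((M k l).im * (M l k).im : ℝ) := by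
    by_cases h : k = l
    · subst h
      apply Complex.ext <;> norm_num [hre, mul_comm]
    · apply Complex.ext <;> simp [h, Ne.symm h, hre]
  simp only [Matrix.trace, Matrix.diag, Matrix.mul_apply, Matrix.map_apply, hkl,
    Finset.sum_add_distrib]
  push_cast
  simp [Finset.card_univ, div_eq_mul_inv]

end MatrixAlgebra

section PhaseSpace

variable {n : ℕ}

def coordMul (k : Fin n) : 𝓢(Fin n → ℝ, ℂ) →L[ℝ] 𝓢(Fin n → ℝ, ℂ) := mulLinear (.proj k)

def partialDeriv (k : Fin n) (f : 𝓢(Fin n → ℝ, ℂ)) : 𝓢(Fin n → ℝ, ℂ) :=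
  ∂_{(Pi.single k 1 : Fin n → ℝ)} f

@[simp]
theorem coordMul_apply (k : Fin n) (f : 𝓢(Fin n → ℝ, ℂ)) (x : Fin n → ℝ) :
    coordMul k f x = x k * f x :=
  rfl

@[simp]
theorem partialDeriv_apply (k : Fin n) (f : 𝓢(Fin n → ℝ, ℂ)) (x : Fin n → ℝ) :
    partialDeriv k f x = fderiv ℝ f x (Pi.single k 1) :=
  lineDerivOp_apply_eq_fderiv _ f x

theorem rotGen_const_mul (c : ℂ) {F : (Fin n → ℝ) × (Fin n → ℝ) → ℂ} (hF : Differentiable ℝ F) :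
    rotGen n (fun z => c * F z) = fun z => c * rotGen n F z := by
  ext z
  simp only [rotGen, fderiv_const_mul (hF z), FunLike.coe_smul, Pi.smul_apply, smul_eq_mul,
    Finset.mul_sum]
  refine Finset.sum_congr rfl fun k _ => ?_
  ring

theorem rotGen_sub {F H : (Fin n → ℝ) × (Fin n → ℝ) → ℂ} (hF : Differentiable ℝ F)
    (hH : Differentiable ℝ H) :
    rotGen n (fun z => F z - H z) = fun z => rotGen n F z - rotGen n H z := by
  ext z
  simp only [rotGen, fderiv_fun_sub (hF z) (hH z), FunLike.coe_sub, Pi.sub_apply, ← mul_sub,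
    ← Finset.sum_sub_distrib]
  congr 1
  refine Finset.sum_congr rfl fun k _ => ?_
  ring

theorem rotGen_sum {ι : Type*} (s : Finset ι) {F : ι → (Fin n → ℝ) × (Fin n → ℝ) → ℂ}
    (hF : ∀ i ∈ s, Differentiable ℝ (F i)) :
    rotGen n (fun z => ∑ i ∈ s, F i z) = fun z => ∑ i ∈ s, rotGen n (F i) z := by
  ext z
  simp only [rotGen, fderiv_fun_sum fun i hi => hF i hi z, FunLike.coe_sum, Finset.sum_apply,
    Finset.mul_sum, ← Finset.sum_sub_distrib]
  rw [Finset.sum_comm]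

theorem rotGen_tensor (f g : 𝓢(Fin n → ℝ, ℂ)) :
    rotGen n (tensor f g) = fun z => -Complex.I * ∑ k : Fin n,
      (tensor (coordMul k f) (partialDeriv k g) z
        - tensor (partialDeriv k f) (coordMul k g) z) := by
  ext z
  simp only [rotGen, fderiv_tensor_apply f.differentiable g.differentiable, tensor,
    coordMul_apply, partialDeriv_apply, map_zero, zero_mul, mul_zero, add_zero, zero_add]
  congr 1
  refine Finset.sum_congr rfl fun k _ => ?_
  ring

theorem rotGen_rotGen_tensor_self (ψ : 𝓢(Fin n → ℝ, ℂ)) :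
    rotGen n (rotGen n (tensor ψ ψ)) = fun z => -∑ k : Fin n, ∑ l : Fin n,
      (tensor (coordMul l (coordMul k ψ)) (partialDeriv l (partialDeriv k ψ)) z
        - tensor (partialDeriv l (coordMul k ψ)) (coordMul l (partialDeriv k ψ)) z
        - tensor (coordMul l (partialDeriv k ψ)) (partialDeriv l (coordMul k ψ)) z
        + tensor (partialDeriv l (partialDeriv k ψ)) (coordMul l (coordMul k ψ)) z) := by
  have hd (f g : 𝓢(Fin n → ℝ, ℂ)) : Differentiable ℝ (tensor f g) :=
    differentiable_tensor f.differentiable g.differentiable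
  rw [rotGen_tensor, rotGen_const_mul, rotGen_sum]
  rotate_left
  · exact fun k _ => (hd _ _).sub (hd _ _)
  · exact .fun_sum fun k _ => (hd _ _).sub (hd _ _)
  ext z
  simp only [rotGen_sub (hd _ _) (hd _ _), rotGen_tensor, Finset.mul_sum, ← Finset.sum_neg_distrib]
  refine Finset.sum_congr rfl fun k _ => ?_
  rw [← Finset.sum_sub_distrib, Finset.mul_sum]
  refine Finset.sum_congr rfl fun l _ => ?_
  linear_combination (tensor (coordMul l (coordMul k ψ)) (partialDeriv l (partialDeriv k ψ)) z
        - tensor (partialDeriv l (coordMul k ψ)) (coordMul l (partialDeriv k ψ)) z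
        - tensor (coordMul l (partialDeriv k ψ)) (partialDeriv l (coordMul k ψ)) z
        + tensor (partialDeriv l (partialDeriv k ψ)) (coordMul l (coordMul k ψ)) z) * Complex.I_sq

theorem l2Inner_coordMul_right (k : Fin n) (f g : 𝓢(Fin n → ℝ, ℂ)) :
    l2Inner f (coordMul k g) = l2Inner (coordMul k f) g :=
  l2Inner_mulLinear_right _ f g

theorem l2Inner_partialDeriv_right (k : Fin n) (f g : 𝓢(Fin n → ℝ, ℂ)) :
    l2Inner f (partialDeriv k g) = -l2Inner (partialDeriv k f) g :=
  l2Inner_lineDerivOp_right f g _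

def coordGram (ψ : 𝓢(Fin n → ℝ, ℂ)) : Matrix (Fin n) (Fin n) ℂ :=
  .of fun k l => l2Inner (coordMul k ψ) (coordMul l ψ)

def partialGram (ψ : 𝓢(Fin n → ℝ, ℂ)) : Matrix (Fin n) (Fin n) ℂ :=
  .of fun k l => l2Inner (partialDeriv k ψ) (partialDeriv l ψ)

def coordPartialGram (ψ : 𝓢(Fin n → ℝ, ℂ)) : Matrix (Fin n) (Fin n) ℂ :=
  .of fun k l => l2Inner (coordMul k ψ) (partialDeriv l ψ)

theorem coordGram_isSymm (ψ : 𝓢(Fin n → ℝ, ℂ)) : (coordGram ψ).IsSymm := by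
  ext k l
  simp only [Matrix.transpose_apply, coordGram, Matrix.of_apply, l2Inner, coordMul_apply, map_mul,
    Complex.conj_ofReal]
  congr 1 with x
  ring

theorem coordGram_isHermitian (ψ : 𝓢(Fin n → ℝ, ℂ)) : (coordGram ψ).IsHermitian := by
  ext k l
  exact conj_l2Inner _ _

theorem partialGram_isHermitian (ψ : 𝓢(Fin n → ℝ, ℂ)) : (partialGram ψ).IsHermitian := by
  ext k l
  exact conj_l2Inner _ _

theorem coordPartialGram_add_conj (ψ : 𝓢(Fin n → ℝ, ℂ)) (k l : Fin n) :
    coordPartialGram ψ k l + conj (coordPartialGram ψ k l)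
      = -(1 : Matrix (Fin n) (Fin n) ℂ) k l * l2Inner ψ ψ := by
  have h := l2Inner_mulLinear_lineDerivOp_add_conj (.proj k) ψ (Pi.single l 1)
  simp only [ContinuousLinearMap.proj_apply, Pi.single_apply, apply_ite, Complex.ofReal_one,
    Complex.ofReal_zero] at h
  rw [Matrix.one_apply, coordPartialGram, Matrix.of_apply, coordMul, partialDeriv, h]
  ring

theorem integral_conj_tensor_mul_rotGen_rotGen (ψ : 𝓢(Fin n → ℝ, ℂ)) :
    ∫ z, conj (tensor ψ ψ z) * rotGen n (rotGen n (tensor ψ ψ)) z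
      = 2 * ((coordGram ψ * partialGram ψ).trace
        - ((coordPartialGram ψ).map conj * coordPartialGram ψ).trace) := by
  have hint := integrable_conj_tensor_mul_tensor ψ ψ
  rw [rotGen_rotGen_tensor_self]
  simp only [mul_neg, Finset.mul_sum, mul_add, mul_sub]
  have hint₄ (f₁ g₁ f₂ g₂ f₃ g₃ f₄ g₄ : 𝓢(Fin n → ℝ, ℂ)) : Integrable fun z =>
      conj (tensor ψ ψ z) * tensor f₁ g₁ z - conj (tensor ψ ψ z) * tensor f₂ g₂ z
        - conj (tensor ψ ψ z) * tensor f₃ g₃ z + conj (tensor ψ ψ z) * tensor f₄ g₄ z :=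
    (((hint _ _).sub' (hint _ _)).sub' (hint _ _)).fun_add (hint _ _)
  rw [integral_neg,
    integral_finsetSum _ fun k _ => integrable_finsetSum _ fun l _ => hint₄ _ _ _ _ _ _ _ _]
  simp only [Matrix.trace, Matrix.diag, Matrix.mul_apply, Finset.mul_sum, ← Finset.sum_sub_distrib,
    ← Finset.sum_neg_distrib]
  refine Finset.sum_congr rfl fun k _ => ?_
  rw [integral_finsetSum _ fun l _ => hint₄ _ _ _ _ _ _ _ _, ← Finset.sum_neg_distrib]
  refine Finset.sum_congr rfl fun l _ => ?_
  rw [integral_add (((hint _ _).sub' (hint _ _)).sub' (hint _ _)) (hint _ _),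
    integral_sub ((hint _ _).sub' (hint _ _)) (hint _ _), integral_sub (hint _ _) (hint _ _)]
  have hxx : l2Inner ψ (coordMul l (coordMul k ψ)) = coordGram ψ k l := by
    rw [l2Inner_coordMul_right]
    exact (coordGram_isSymm ψ).apply k l
  have hdd : l2Inner ψ (partialDeriv l (partialDeriv k ψ)) = -partialGram ψ l k :=
    l2Inner_partialDeriv_right _ _ _
  have hdx : l2Inner ψ (partialDeriv l (coordMul k ψ)) = -conj (coordPartialGram ψ k l) := by
    rw [l2Inner_partialDeriv_right, coordPartialGram, Matrix.of_apply, conj_l2Inner]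
  have hxd : l2Inner ψ (coordMul l (partialDeriv k ψ)) = coordPartialGram ψ l k :=
    l2Inner_coordMul_right _ _ _
  simp only [integral_conj_tensor_mul_tensor, hxx, hdd, hdx, hxd, Matrix.map_apply]
  ring

theorem covMatrix_eq_two_smul_fromBlocks (ψ : 𝓢(Fin n → ℝ, ℂ)) (hm : ∀ j, firstMoment n ψ j = 0) :
    covMatrix n ψ = (2 : ℝ) • Matrix.fromBlocks ((coordGram ψ).map Complex.re)
      ((coordPartialGram ψ).map Complex.im) ((coordPartialGram ψ).map Complex.im)ᵀ
      ((partialGram ψ).map Complex.re) := by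
  set R : Fin n ⊕ Fin n → 𝓢(Fin n → ℝ, ℂ) :=
    Sum.elim (coordMul · ψ) fun k => (-Complex.I) • partialDeriv k ψ
  have hR (j : Fin n ⊕ Fin n) : quadratureOp n j ψ = R j := by
    cases j <;> ext x <;> simp [quadratureOp, R]
  have hV (j k : Fin n ⊕ Fin n) : covMatrix n ψ j k = 2 * (l2Inner (R j) (R k)).re := by
    simp [covMatrix, hm, hR, l2Inner]
  ext (a | a) (b | b) <;>
    simp only [hV, R, Sum.elim_inl, Sum.elim_inr, l2Inner_smul_left, l2Inner_smul_right,
      Matrix.smul_apply, Matrix.fromBlocks_apply₁₁, Matrix.fromBlocks_apply₁₂,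
      Matrix.fromBlocks_apply₂₁, Matrix.fromBlocks_apply₂₂, Matrix.transpose_apply,
      Matrix.map_apply, coordGram, coordPartialGram, partialGram, Matrix.of_apply, smul_eq_mul]
  · simp
  · rw [← conj_l2Inner (coordMul b ψ)]
    simp
  · simp

theorem trace_symplOmega_mul_fromBlocks (P Q S : Matrix (Fin n) (Fin n) ℝ) :
    (symplOmega n * Matrix.fromBlocks P Q Qᵀ S * (symplOmega n)ᵀ * Matrix.fromBlocks P Q Qᵀ S).trace
      = 2 * ((P * S).trace - (Q * Q).trace) := by
  have htr (A B C D : Matrix (Fin n) (Fin n) ℝ) :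
      (Matrix.fromBlocks A B C D).trace = A.trace + D.trace := by
    simp [Matrix.trace, Fintype.sum_sum_type]
  simp only [symplOmega, Matrix.fromBlocks_transpose, Matrix.fromBlocks_multiply, htr]
  simp only [zero_mul, one_mul, zero_add, Matrix.transpose_zero, mul_zero, Matrix.transpose_one,
    mul_one, Matrix.transpose_neg, mul_neg, add_zero, neg_mul, ← Matrix.transpose_mul,
    Matrix.trace_add, Matrix.trace_mul_comm S P, Matrix.trace_neg, Matrix.trace_transpose, neg_neg]
  ring

end PhaseSpace

theorem inner_rotGen_sq_eq_symplectic_trace_general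
    (n : ℕ) (ψ : SchwartzMap (Fin n → ℝ) ℂ)
    (hnorm : ∫ x, ‖ψ x‖ ^ 2 = 1)
    (hmean : ∀ j : Fin n ⊕ Fin n, ∫ x, (starRingEnd ℂ) (ψ x) * quadratureOp n j (⇑ψ) x = 0) :
    (∫ z : (Fin n → ℝ) × (Fin n → ℝ),
        (starRingEnd ℂ) (ψ z.1 * ψ z.2) *
          rotGen n (rotGen n (fun w => ψ w.1 * ψ w.2)) z)
      = (((1 / 4 : ℝ) * (symplOmega n * covMatrix n ⇑ψ * (symplOmega n).transpose *
            covMatrix n ⇑ψ).trace - n / 2 : ℝ) : ℂ) := by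
  have hψ : l2Inner ψ ψ = 1 := by
    rw [l2Inner, ← Complex.ofReal_one, ← hnorm, ← integral_complex_ofReal]
    simp [Complex.conj_mul']
  have hm (j : Fin n ⊕ Fin n) : firstMoment n ψ j = 0 := by
    simp [firstMoment, hmean j]
  have hccr (k l : Fin n) : coordPartialGram ψ k l + conj (coordPartialGram ψ k l)
      = -(1 : Matrix (Fin n) (Fin n) ℂ) k l := by
    rw [coordPartialGram_add_conj, hψ, mul_one]
  refine (integral_conj_tensor_mul_rotGen_rotGen ψ).trans ?_
  rw [covMatrix_eq_two_smul_fromBlocks ψ hm]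
  simp only [Matrix.smul_mul, Matrix.mul_smul, smul_smul, Matrix.trace_smul,
    trace_symplOmega_mul_fromBlocks, smul_eq_mul]
  rw [trace_mul_eq_ofReal_of_isSymm_of_isHermitian (coordGram_isSymm ψ) (coordGram_isHermitian ψ)
    (partialGram_isHermitian ψ), trace_map_conj_mul_of_add_conj_eq_neg_one hccr, Fintype.card_fin]
  push_cast
  ring

/-- for a normalized Schwartz `ψ` with vanishing first moments,
`⟨ψ⊗ψ, G² (ψ⊗ψ)⟩ = (1/4)·Tr(Ω V Ωᵀ V) − n/2` where `V = V(ψ)`. -/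
theorem inner_rotGen_sq_eq_symplectic_trace
    (n : ℕ) (hn : 1 ≤ n) (ψ : SchwartzMap (Fin n → ℝ) ℂ)
    (hnorm : ∫ x, ‖ψ x‖ ^ 2 = 1)
    (hmean : ∀ j : Fin n ⊕ Fin n, ∫ x, (starRingEnd ℂ) (ψ x) * quadratureOp n j (⇑ψ) x = 0) :
    (∫ z : (Fin n → ℝ) × (Fin n → ℝ),
        (starRingEnd ℂ) (ψ z.1 * ψ z.2) *
          rotGen n (rotGen n (fun w => ψ w.1 * ψ w.2)) z)
      = (((1 / 4 : ℝ) * (symplOmega n * covMatrix n ⇑ψ * (symplOmega n).transpose *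
            covMatrix n ⇑ψ).trace - n / 2 : ℝ) : ℂ) :=
  inner_rotGen_sq_eq_symplectic_trace_general n ψ hnorm hmean
end
end

section
/- Let H be a complex Hilbert space and let U : H → H be a unitary continuous linear operator with U⁸ = 1. Let P denote the orthogonal projection of H onto the closed subspace {x ∈ H : Ux = x}, and set α = (2 + √2)/4. Then for every x ∈ H, ⟨x, (1/4)(1 + U)(1 + U*) x⟩ ≤ ‖Px‖² + α·‖x − Px‖²; equivalently, the self-adjoint operator P + α(1 − P) − (1/4)(1 + U)(1 + U*) is a positive operator. -/
/-!
With `V = U + U*`, the acceptance operator is `(2 + V)/4`. Since `U⁸ = 1`, `V` is annihilated by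
`(t - 2) t (t + 2) (t² - 2)`, whose roots `2 cos (πk/4)` are the values of `ζ + ζ⁻¹` at the eighth
roots of unity, and `V` acts as `2` exactly on the fixed space of `U`. Hence `t (t + 2) (t² - 2)`
evaluated at `V` kills the orthogonal complement of the fixed space, and a sum-of-squares
certificate then gives `V ≤ √2` there: the fixed part of `x` contributes `‖Px‖²` and the rest at
most `(2 + √2)/4 · ‖x - Px‖²`.
-/

open Polynomial ContinuousLinearMap
open scoped InnerProductSpace

theorem Unitary.star_eq_pow_of_pow_succ_eq_one {R : Type*} [Monoid R] [StarMul R] {u : R}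
    (hu : u ∈ unitary R) {n : ℕ} (hn : u ^ (n + 1) = 1) : star u = u ^ n :=
  calc star u = star u * u ^ (n + 1) := by rw [hn, mul_one]
    _ = u ^ n := by rw [pow_succ', ← mul_assoc, Unitary.star_mul_self_of_mem hu, one_mul]

theorem Unitary.one_add_mul_one_add_star {R : Type*} [Ring R] [StarMul R] {u : R}
    (hu : u ∈ unitary R) : (1 + u) * (1 + star u) = 2 + (u + star u) :=
  calc (1 + u) * (1 + star u) = 1 + u * star u + (u + star u) := by noncomm_ring
    _ = 2 + (u + star u) := by rw [Unitary.mul_star_self_of_mem hu, one_add_one_eq_two]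

noncomputable def fixedSpacePoly : ℝ[X] := X * (X + 2) * (X ^ 2 - 2)

theorem aeval_add_star_X_sub_two_mul_fixedSpacePoly_eq_zero {A : Type*} [Ring A] [StarMul A]
    [Algebra ℝ A] {u : A} (hu : u ∈ unitary A) (h8 : u ^ 8 = 1) :
    aeval (u + star u) ((X - 2) * fixedSpacePoly) = 0 := by
  have hdvd : ((X - 2) * fixedSpacePoly).comp (X + X ^ 7) = (X ^ 8 - 1) *
      (X ^ 27 + 5 * X ^ 21 + X ^ 19 + 10 * X ^ 15 - X ^ 13 + X ^ 11 + 10 * X ^ 9 - 8 * X ^ 7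
        - X ^ 5 + 6 * X ^ 3 - 8 * X) := by
    simp only [fixedSpacePoly, mul_comp, Polynomial.sub_comp, Polynomial.add_comp, pow_comp,
      X_comp, ofNat_comp]
    ring
  rw [Unitary.star_eq_pow_of_pow_succ_eq_one hu h8,
    show u + u ^ 7 = aeval u (X + X ^ 7 : ℝ[X]) by simp, ← aeval_comp, hdvd]
  simp [h8]

theorem IsSelfAdjoint.aeval {A : Type*} [CStarAlgebra A] {a : A} (ha : IsSelfAdjoint a)
    (p : ℝ[X]) : IsSelfAdjoint (aeval a p) :=
  cfc_polynomial p a ▸ cfc_predicate _ a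

theorem aeval_nonneg_of_forall_eval_nonneg {A : Type*} [CStarAlgebra A] [PartialOrder A]
    [StarOrderedRing A] {a : A} (ha : IsSelfAdjoint a) {p : ℝ[X]} (hp : ∀ t, 0 ≤ p.eval t) :
    0 ≤ aeval a p :=
  cfc_polynomial p a ▸ cfc_nonneg fun t _ ↦ hp t

theorem re_inner_add_apply_add_of_apply_eq_smul {𝕜 E : Type*} [RCLike 𝕜] [NormedAddCommGroup E]
    [InnerProductSpace 𝕜 E] [CompleteSpace E] {T : E →L[𝕜] E} (hT : IsSelfAdjoint T) {p q : E}
    {c : ℝ} (hp : T p = (c : 𝕜) • p) (hpq : ⟪p, q⟫_𝕜 = 0) :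
    RCLike.re ⟪p + q, T (p + q)⟫_𝕜 = c * ‖p‖ ^ 2 + RCLike.re ⟪q, T q⟫_𝕜 := by
  have hqp : ⟪q, p⟫_𝕜 = 0 := inner_eq_zero_symm.1 hpq
  have hpTq : ⟪p, T q⟫_𝕜 = 0 :=
    (hT.isSymmetric p q).symm.trans (by simp [hp, inner_smul_left, hpq])
  simp [inner_add_left, inner_add_right, hpTq, hqp, hp, inner_smul_right,
    inner_self_eq_norm_sq_to_K]

namespace ContinuousLinearMap

variable {𝕜 E : Type*} [RCLike 𝕜] [NormedAddCommGroup E] [InnerProductSpace 𝕜 E] [CompleteSpace E]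
  {U : E →L[𝕜] E}

theorem star_apply_eq_self_of_apply_eq_self (hU : U ∈ unitary (E →L[𝕜] E)) {z : E}
    (hz : U z = z) : star U z = z :=
  calc star U z = (star U * U) z := by rw [mul_apply_eq_comp, hz]
    _ = z := by rw [Unitary.star_mul_self_of_mem hU, one_apply_eq_self]

theorem apply_eq_self_of_add_star_apply_eq_two_nsmul (hU : U ∈ unitary (E →L[𝕜] E)) {z : E}
    (hz : (U + star U) z = 2 • z) : U z = z := by
  rw [two_nsmul, ← two_smul 𝕜] at hz
  have hpar := parallelogram_law_with_norm 𝕜 (U z) (star U z)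
  rw [← add_apply, hz, norm_map_of_mem_unitary hU, norm_map_of_mem_unitary (Unitary.star_mem hU),
    norm_smul, RCLike.norm_two] at hpar
  -- two vectors of norm `‖z‖` with sum of norm `2‖z‖` are equal
  have hdiff : U z = star U z :=
    sub_eq_zero.1 <| norm_eq_zero.1 <| by nlinarith [norm_nonneg (U z - star U z)]
  rw [add_apply, ← hdiff, ← two_smul 𝕜] at hz
  exact smul_right_injective E two_ne_zero hz

end ContinuousLinearMap

section FixedSpace

variable {H : Type*} [NormedAddCommGroup H] [InnerProductSpace ℂ H] [CompleteSpace H]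
  {U : H →L[ℂ] H}

theorem aeval_add_star_fixedSpacePoly_apply_mem_ker (hU : U ∈ unitary (H →L[ℂ] H))
    (hU8 : U ^ 8 = 1) (w : H) :
    aeval (U + star U) fixedSpacePoly w ∈ LinearMap.ker ((U - 1 : H →L[ℂ] H) : H →ₗ[ℂ] H) := by
  have h := congr($(aeval_add_star_X_sub_two_mul_fixedSpacePoly_eq_zero hU hU8) w)
  simp only [map_mul, map_sub, aeval_X, map_ofNat, mul_apply_eq_comp, zero_apply, sub_apply,
    ofNat_apply, sub_eq_zero] at h
  rw [LinearMap.mem_ker, coe_coe, sub_apply, one_apply_eq_self, sub_eq_zero]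
  exact apply_eq_self_of_add_star_apply_eq_two_nsmul hU h

theorem aeval_add_star_fixedSpacePoly_apply_eq_zero_of_mem_orthogonal
    (hU : U ∈ unitary (H →L[ℂ] H)) (hU8 : U ^ 8 = 1) {y : H}
    (hy : y ∈ (LinearMap.ker ((U - 1 : H →L[ℂ] H) : H →ₗ[ℂ] H))ᗮ) :
    aeval (U + star U) fixedSpacePoly y = 0 := by
  set A := aeval (U + star U) fixedSpacePoly
  have hA : IsSelfAdjoint A := (IsSelfAdjoint.add_star_self U).aeval _
  rw [← inner_self_eq_zero (𝕜 := ℂ)]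
  exact (hA.isSymmetric y (A y)).trans <| Submodule.inner_left_of_mem_orthogonal
    (aeval_add_star_fixedSpacePoly_apply_mem_ker hU hU8 (A y)) hy

theorem re_inner_le_sqrt_two_mul_of_aeval_fixedSpacePoly_apply_eq_zero {V : H →L[ℂ] H}
    (hV : IsSelfAdjoint V) {q : H} (hq : aeval V fixedSpacePoly q = 0) :
    (⟪q, V q⟫_ℂ).re ≤ √2 * ‖q‖ ^ 2 := by
  -- `c` is the only constant for which `√2` is a double root of `σ`
  set c : ℝ := 4 * (2 + √2)
  set σ : ℝ[X] := C c * (C √2 - X) + fixedSpacePoly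
  have hσ : ∀ t, 0 ≤ σ.eval t := by
    intro t
    have hs : √2 ^ 2 = 2 := Real.sq_sqrt zero_le_two
    have hsos : σ.eval t = (t - √2) ^ 2 * ((t + 1 + √2) ^ 2 + 1 + 2 * √2) := by
      simp only [σ, c, fixedSpacePoly, eval_add, eval_mul, eval_sub, eval_C, eval_X, eval_pow,
        eval_ofNat]
      linear_combination (2 * t ^ 2 + 6 * t - √2 ^ 2 - 4 * √2) * hs
    rw [hsos]
    positivity
  have hσq : aeval V σ q = c • (√2 • q - V q) := by
    simp only [σ, map_add, map_mul, map_sub, aeval_C, aeval_X, add_apply, mul_apply_eq_comp,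
      sub_apply, hq, add_zero, ContinuousLinearMap.algebraMap_apply, smul_sub]
  have hpos := ((nonneg_iff_isPositive _).1
    (aeval_nonneg_of_forall_eval_nonneg hV hσ)).re_inner_nonneg_right q
  rw [hσq, RCLike.real_smul_eq_coe_smul (K := ℂ) c, RCLike.real_smul_eq_coe_smul (K := ℂ) √2,
    inner_smul_real_right, inner_sub_right, inner_smul_real_right, RCLike.smul_re, map_sub,
    RCLike.smul_re, inner_self_eq_norm_sq, RCLike.re_to_complex] at hpos
  have hc : 0 < c := by positivity
  linarith [(mul_nonneg_iff_of_pos_left hc).1 hpos]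

end FixedSpace

/-- for a unitary `U` with `U⁸ = 1` on a complex Hilbert space, writing
`P` for the orthogonal projection onto the fixed subspace `{x | Ux = x}` and
`α = (2 + √2)/4`, the acceptance operator `(1/4)(1+U)(1+U*)` of the Hadamard test
satisfies `⟨x, (1/4)(1+U)(1+U*)x⟩ ≤ ‖Px‖² + α‖x − Px‖²` for every `x`. -/
theorem hadamard_test_acceptance_le
    {H : Type*} [NormedAddCommGroup H] [InnerProductSpace ℂ H] [CompleteSpace H]
    (U : H →L[ℂ] H) (hU : U ∈ unitary (H →L[ℂ] H)) (hU8 : U ^ 8 = 1) (x : H) :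
    (inner ℂ x (((1 / 4 : ℂ) • ((1 + U) * (1 + star U))) x) : ℂ).re ≤
      ‖(Submodule.orthogonalProjectionOnto (LinearMap.ker ((U - 1 : H →L[ℂ] H) : H →ₗ[ℂ] H)) x : H)‖ ^ 2 +
        (2 + Real.sqrt 2) / 4 *
          ‖x - (Submodule.orthogonalProjectionOnto (LinearMap.ker ((U - 1 : H →L[ℂ] H) : H →ₗ[ℂ] H)) x : H)‖ ^ 2 := by
  set K := LinearMap.ker ((U - 1 : H →L[ℂ] H) : H →ₗ[ℂ] H)
  set p : H := (K.orthogonalProjectionOnto x : H)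
  set q := x - p
  set V := U + star U
  have hV : IsSelfAdjoint V := .add_star_self U
  have hq : q ∈ Kᗮ := K.sub_starProjection_mem_orthogonal x
  have hpq : ⟪p, q⟫_ℂ = 0 := Submodule.inner_right_of_mem_orthogonal (SetLike.coe_mem _) hq
  have hUp : U p = p := by
    have hpK : p ∈ K := SetLike.coe_mem _
    rwa [LinearMap.mem_ker, coe_coe, sub_apply, one_apply_eq_self, sub_eq_zero] at hpK
  have hVp : V p = ((2 : ℝ) : ℂ) • p := by
    rw [add_apply, hUp, star_apply_eq_self_of_apply_eq_self hU hUp]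
    norm_num [two_smul]
  have hx : ‖x‖ ^ 2 = ‖p‖ ^ 2 + ‖q‖ ^ 2 := by
    rw [← add_sub_cancel p x]
    simpa only [sq] using norm_add_sq_eq_norm_sq_add_norm_sq_of_inner_eq_zero p q hpq
  have hxV := re_inner_add_apply_add_of_apply_eq_smul (c := 2) hV hVp hpq
  rw [add_sub_cancel] at hxV
  have hqV := re_inner_le_sqrt_two_mul_of_aeval_fixedSpacePoly_apply_eq_zero hV
    (aeval_add_star_fixedSpacePoly_apply_eq_zero_of_mem_orthogonal hU hU8 hq)
  have hlhs : (⟪x, ((1 / 4 : ℂ) • (2 + V)) x⟫_ℂ).re = (2 * ‖x‖ ^ 2 + (⟪x, V x⟫_ℂ).re) / 4 := by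
    simp [two_nsmul, inner_self_eq_norm_sq_to_K, ← Complex.ofReal_pow]
    ring
  rw [Unitary.one_add_mul_one_add_star hU, hlhs]
  simp only [RCLike.re_to_complex] at hxV
  linarith
end
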